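/- arXiv:1401.3272 — 9 statements merged into one kernel-verified Lean document; each statement's English description precedes it below -/
import Mathlib

section
/- If a finite-dimensional real Lie algebra g₀ is a contraction of a finite-dimensional real Lie algebra g, then rank(ad*_{g₀}) ≤ rank(ad*_{g}). -/
/-!
Rank of bilinear forms is lower semicontinuous: if the rows `B₀ (u i)` of a form are linearly
independent, so are the rows of every nearby form, since linear independence is an open
condition in coordinates. Now `B^{g₀}_ξ` is the pointwise limit of the forms
`(x, y) ↦ ξ (C_r⁻¹ [C_r x, C_r y])`, and each of these is `B^g_{ξ ∘ C_r⁻¹}` pulled back along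
`C_r`, so its rank is at most `rank (ad*_g)`.
-/

open Filter Topology

/-- `bg₀` (a bracket on `W`) is a contraction of `bg` (a bracket on `V`):
there are a set `I ⊆ ℝ` having `0` as an accumulation point and a family of invertible
linear maps `C r : W → V` (`r ∈ I`) such that for all `x y`,
`bg₀ x y = lim_{I ∋ r → 0} (C r)⁻¹ (bg (C r x) (C r y))`. -/
def IsContractionOf {V W : Type*} [AddCommGroup V] [Module ℝ V]
    [AddCommGroup W] [Module ℝ W] [TopologicalSpace W]
    (bg : V → V → V) (bg₀ : W → W → W) : Prop :=
  ∃ I : Set ℝ, (𝓝[I \ {0}] (0 : ℝ)).NeBot ∧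
    ∃ C : ℝ → (W ≃ₗ[ℝ] V), ∀ x y : W,
      Tendsto (fun r => (C r).symm (bg (C r x) (C r y))) (𝓝[I \ {0}] (0 : ℝ)) (𝓝 (bg₀ x y))

/-- For `ξ ∈ g*`, the bilinear form `B^g_ξ (x, y) = ξ ⁅x, y⁆`, as a linear map
`g →ₗ (g →ₗ ℝ)`. -/
noncomputable def coadjointForm {g : Type*} [LieRing g] [LieAlgebra ℝ g]
    (ξ : Module.Dual ℝ g) : g →ₗ[ℝ] g →ₗ[ℝ] ℝ :=
  LinearMap.mk₂ ℝ (fun x y => ξ ⁅x, y⁆)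
    (fun x x' y => by simp only [add_lie, map_add])
    (fun c x y => by simp only [smul_lie, map_smul])
    (fun x y y' => by simp only [lie_add, map_add])
    (fun c x y => by simp only [lie_smul, map_smul])

/-- `rank (ad*_g) = max { rank B^g_ξ : ξ ∈ g* }`. -/
noncomputable def coadjointRank (g : Type*) [LieRing g] [LieAlgebra ℝ g] : ℕ :=
  ⨆ ξ : Module.Dual ℝ g, Module.finrank ℝ (LinearMap.range (coadjointForm ξ))

open Module

namespace LinearMap

section Field

variable {K V V' : Type*} [Field K] [AddCommGroup V] [Module K V] [AddCommGroup V'] [Module K V']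
  [FiniteDimensional K V']

theorem card_le_finrank_range_of_linearIndependent {ι : Type*} [Fintype ι] (f : V →ₗ[K] V')
    {u : ι → V} (hu : LinearIndependent K (f ∘ u)) :
    Fintype.card ι ≤ finrank K (range f) := by
  have hu' : LinearIndependent K (f.rangeRestrict ∘ u) := .of_comp (range f).subtype hu
  exact hu'.fintype_card_le_finrank

theorem exists_linearIndependent_comp (f : V →ₗ[K] V') :
    ∃ u : Fin (finrank K (range f)) → V, LinearIndependent K (f ∘ u) := by
  let b := finBasis K (range f)
  choose u hu using fun i => f.surjective_rangeRestrict (b i)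
  refine ⟨u, ?_⟩
  have : f ∘ u = (range f).subtype ∘ b := funext fun i => congrArg Subtype.val (hu i)
  rw [this]
  exact b.linearIndependent.map' _ (Submodule.ker_subtype _)

variable {W Q Q' : Type*} [AddCommGroup W] [Module K W] [AddCommGroup Q] [Module K Q]
  [AddCommGroup Q'] [Module K Q'] [FiniteDimensional K W]

theorem finrank_range_compl₁₂_le (B : V →ₗ[K] W →ₗ[K] K) (f : Q →ₗ[K] V) (g : Q' →ₗ[K] W) :
    finrank K (range (B.compl₁₂ f g)) ≤ finrank K (range B) := by
  have : B.compl₁₂ f g = (lcomp K K g) ∘ₗ B ∘ₗ f := rfl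
  rw [this, range_comp]
  exact (Submodule.finrank_map_le _ _).trans (Submodule.finrank_mono (range_comp_le_range f B))

end Field

section NormedField

variable {𝕜 V W α : Type*} [NontriviallyNormedField 𝕜] [CompleteSpace 𝕜]
  [AddCommGroup V] [Module 𝕜 V] [AddCommGroup W] [Module 𝕜 W] [FiniteDimensional 𝕜 W]

theorem eventually_finrank_range_le_of_tendsto {l : Filter α} {B : α → V →ₗ[𝕜] W →ₗ[𝕜] 𝕜}
    {B₀ : V →ₗ[𝕜] W →ₗ[𝕜] 𝕜} (hB : ∀ x y, Tendsto (fun a => B a x y) l (𝓝 (B₀ x y))) :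
    ∀ᶠ a in l, finrank 𝕜 (range B₀) ≤ finrank 𝕜 (range (B a)) := by
  obtain ⟨u, hu⟩ := B₀.exists_linearIndependent_comp
  let coord := (finBasis 𝕜 W).dualBasis.equivFun
  have hlim : Tendsto (fun a => coord ∘ B a ∘ u) l (𝓝 (coord ∘ B₀ ∘ u)) :=
    tendsto_pi_nhds.2 fun i => tendsto_pi_nhds.2 fun j => by
      simpa [coord, Basis.dualBasis_equivFun] using hB (u i) (finBasis 𝕜 W j)
  filter_upwards [hlim.eventually (hu.map' coord.toLinearMap coord.ker).eventually] with a ha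
  simpa only [Fintype.card_fin] using
    card_le_finrank_range_of_linearIndependent (B a) (ha.of_comp coord.toLinearMap)

end NormedField

end LinearMap

theorem finrank_range_coadjointForm_le_coadjointRank {g : Type*} [LieRing g] [LieAlgebra ℝ g]
    [FiniteDimensional ℝ g] (ξ : Dual ℝ g) :
    finrank ℝ (LinearMap.range (coadjointForm ξ)) ≤ coadjointRank g :=
  le_ciSup (f := fun η : Dual ℝ g => finrank ℝ (LinearMap.range (coadjointForm η)))
    ⟨finrank ℝ (Dual ℝ g), by rintro _ ⟨η, rfl⟩; exact Submodule.finrank_le _⟩ ξ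

/-- If a finite-dimensional real Lie algebra `g₀` is a contraction of a finite-dimensional
real Lie algebra `g`, then `rank (ad*_{g₀}) ≤ rank (ad*_g)`. -/
theorem coadjointRank_le_of_isContractionOf {g g₀ : Type*}
    [LieRing g] [LieAlgebra ℝ g] [FiniteDimensional ℝ g]
    [LieRing g₀] [LieAlgebra ℝ g₀] [FiniteDimensional ℝ g₀]
    [TopologicalSpace g₀] [IsTopologicalAddGroup g₀] [ContinuousSMul ℝ g₀] [T2Space g₀]
    (h : IsContractionOf (fun x y : g => ⁅x, y⁆) (fun x y : g₀ => ⁅x, y⁆)) :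
    coadjointRank g₀ ≤ coadjointRank g := by
  obtain ⟨I, hI, C, hC⟩ := h
  refine ciSup_le fun ξ => ?_
  let B : ℝ → g₀ →ₗ[ℝ] g₀ →ₗ[ℝ] ℝ := fun r =>
    (coadjointForm (ξ ∘ₗ (C r).symm.toLinearMap)).compl₁₂ (C r).toLinearMap (C r).toLinearMap
  have hB : ∀ x y, Tendsto (fun r => B r x y) (𝓝[I \ {0}] 0) (𝓝 (coadjointForm ξ x y)) :=
    fun x y => (ξ.continuous_of_finiteDimensional.tendsto _).comp (hC x y)
  obtain ⟨r, hr⟩ := (LinearMap.eventually_finrank_range_le_of_tendsto hB).exists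
  calc finrank ℝ (LinearMap.range (coadjointForm ξ)) ≤ finrank ℝ (LinearMap.range (B r)) := hr
    _ ≤ finrank ℝ (LinearMap.range (coadjointForm (ξ ∘ₗ (C r).symm.toLinearMap))) :=
      LinearMap.finrank_range_compl₁₂_le _ _ _
    _ ≤ coadjointRank g := finrank_range_coadjointForm_le_coadjointRank _
end

section
/- Let m ≥ n ≥ 3 be integers with n odd. Then f_m ⇝ h_n × a_{m−n} holds if and only if n = 3. -/
open Filter Topology

/-- The bracket of the `m`-dimensional filiform Lie algebra `f_m` on `Fin m → ℝ`:
the basis vectors `X_0, …, X_{m-2}` are the coordinate vectors `e_0, …, e_{m-2}` and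
`Y = e_{m-1}`, with `[Y, X_j] = X_{j-1}` for `1 ≤ j ≤ m - 2`. -/
def filiformBracket (m : ℕ) (x y : Fin m → ℝ) : Fin m → ℝ :=
  fun i => if h : (i : ℕ) + 2 < m then
    x ⟨m - 1, by omega⟩ * y ⟨(i : ℕ) + 1, by omega⟩ -
      y ⟨m - 1, by omega⟩ * x ⟨(i : ℕ) + 1, by omega⟩
  else 0

/-- The bracket of `h_{2k+1} × a_{m - (2k+1)}` on `Fin m → ℝ`: the Heisenberg algebra
`h_{2k+1}` has basis `X_1, …, X_k` (coordinates `0, …, k-1`), `Y_1, …, Y_k`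
(coordinates `k, …, 2k-1`) and `Z` (coordinate `2k`), with `[X_j, Y_j] = Z`;
the remaining coordinates span an abelian direct factor. -/
def heisenbergProdBracket (m k : ℕ) (x y : Fin m → ℝ) : Fin m → ℝ :=
  fun i => if h : (i : ℕ) = 2 * k ∧ 2 * k < m then
    ∑ j : Fin k,
      (x ⟨(j : ℕ), by have := j.isLt; omega⟩ * y ⟨k + (j : ℕ), by have := j.isLt; omega⟩ -
        x ⟨k + (j : ℕ), by have := j.isLt; omega⟩ * y ⟨(j : ℕ), by have := j.isLt; omega⟩)
  else 0

/-! ### Auxiliary material -/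

noncomputable section ContractionAux

/-- The "shift" map underlying the filiform bracket. -/
def shiftMap (m : ℕ) (v : Fin m → ℝ) : Fin m → ℝ :=
  fun i => if h : (i : ℕ) + 2 < m then v ⟨(i : ℕ) + 1, by omega⟩ else 0

lemma filiform_eq (m : ℕ) (hm : 3 ≤ m) (A B : Fin m → ℝ) :
    filiformBracket m A B =
      A ⟨m - 1, by omega⟩ • shiftMap m B - B ⟨m - 1, by omega⟩ • shiftMap m A := by
  funext i
  simp only [filiformBracket, shiftMap, Pi.sub_apply, Pi.smul_apply, smul_eq_mul]
  split_ifs <;> ring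

/-- The contracting family, as a plain function, for the case `k = 1`. -/
def Cfun (m : ℕ) (hm : 3 ≤ m) (r : ℝ) (x : Fin m → ℝ) : Fin m → ℝ := fun i =>
  if (i : ℕ) = 0 then x ⟨2, by omega⟩
  else if (i : ℕ) = 1 then x ⟨1, by omega⟩
  else if h : (i : ℕ) = m - 1 then x ⟨0, by omega⟩
  else r ^ ((i : ℕ) + 1) * x ⟨(i : ℕ) + 1, by have := i.isLt; omega⟩

/-- The inverse of `Cfun`. -/
def Cinv (m : ℕ) (hm : 3 ≤ m) (r : ℝ) (y : Fin m → ℝ) : Fin m → ℝ := fun j =>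
  if (j : ℕ) = 0 then y ⟨m - 1, by omega⟩
  else if (j : ℕ) = 1 then y ⟨1, by omega⟩
  else if (j : ℕ) = 2 then y ⟨0, by omega⟩
  else (r ^ (j : ℕ))⁻¹ * y ⟨(j : ℕ) - 1, by have := j.isLt; omega⟩

lemma Cfun_zero (m : ℕ) (hm : 3 ≤ m) (r : ℝ) (x : Fin m → ℝ) (h0 : 0 < m) :
    Cfun m hm r x ⟨0, h0⟩ = x ⟨2, by omega⟩ := by
  simp [Cfun]

lemma Cfun_one (m : ℕ) (hm : 3 ≤ m) (r : ℝ) (x : Fin m → ℝ) (h1 : 1 < m) :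
    Cfun m hm r x ⟨1, h1⟩ = x ⟨1, h1⟩ := by
  simp [Cfun]

lemma Cfun_last (m : ℕ) (hm : 3 ≤ m) (r : ℝ) (x : Fin m → ℝ) (h : m - 1 < m) :
    Cfun m hm r x ⟨m - 1, h⟩ = x ⟨0, by omega⟩ := by
  simp only [Cfun, Fin.val_mk]
  rw [if_neg (by omega), if_neg (by omega)]
  simp

lemma Cfun_mid (m : ℕ) (hm : 3 ≤ m) (r : ℝ) (x : Fin m → ℝ) (s : ℕ)
    (h2 : 2 ≤ s) (hlt : s + 1 < m) :
    Cfun m hm r x ⟨s, by omega⟩ = r ^ (s + 1) * x ⟨s + 1, hlt⟩ := by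
  simp only [Cfun, Fin.val_mk]
  rw [if_neg (by omega), if_neg (by omega), dif_neg (by omega)]

lemma Cinv_zero (m : ℕ) (hm : 3 ≤ m) (r : ℝ) (y : Fin m → ℝ) (h0 : 0 < m) :
    Cinv m hm r y ⟨0, h0⟩ = y ⟨m - 1, by omega⟩ := by
  simp [Cinv]

lemma Cinv_one (m : ℕ) (hm : 3 ≤ m) (r : ℝ) (y : Fin m → ℝ) (h1 : 1 < m) :
    Cinv m hm r y ⟨1, h1⟩ = y ⟨1, h1⟩ := by
  simp [Cinv]

lemma Cinv_two (m : ℕ) (hm : 3 ≤ m) (r : ℝ) (y : Fin m → ℝ) (h2 : 2 < m) :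
    Cinv m hm r y ⟨2, h2⟩ = y ⟨0, by omega⟩ := by
  simp [Cinv]

lemma Cinv_ge3 (m : ℕ) (hm : 3 ≤ m) (r : ℝ) (y : Fin m → ℝ) (j : ℕ)
    (h3 : 3 ≤ j) (hj : j < m) :
    Cinv m hm r y ⟨j, hj⟩ = (r ^ j)⁻¹ * y ⟨j - 1, by omega⟩ := by
  simp only [Cinv, Fin.val_mk]
  rw [if_neg (by omega), if_neg (by omega), if_neg (by omega)]

lemma Cfun_left_inv (m : ℕ) (hm : 3 ≤ m) (r : ℝ) (hr : r ≠ 0) (x : Fin m → ℝ) :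
    Cinv m hm r (Cfun m hm r x) = x := by
  funext j
  rcases j with ⟨j, hj⟩
  rcases Nat.lt_or_ge j 3 with h3 | h3
  · interval_cases j
    · rw [Cinv_zero m hm r _ hj, Cfun_last m hm r x (by omega)]
    · rw [Cinv_one m hm r _ hj, Cfun_one m hm r x hj]
    · rw [Cinv_two m hm r _ hj, Cfun_zero m hm r x (by omega)]
  · rw [Cinv_ge3 m hm r _ j h3 hj,
      Cfun_mid m hm r x (j - 1) (by omega) (by omega)]
    simp only [show j - 1 + 1 = j from by omega]
    rw [inv_mul_cancel_left₀ (pow_ne_zero _ hr)]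

lemma Cfun_right_inv (m : ℕ) (hm : 3 ≤ m) (r : ℝ) (hr : r ≠ 0) (y : Fin m → ℝ) :
    Cfun m hm r (Cinv m hm r y) = y := by
  funext i
  rcases i with ⟨i, hi⟩
  rcases eq_or_ne i 0 with h0 | h0
  · subst h0
    rw [Cfun_zero m hm r _ hi, Cinv_two m hm r y (by omega)]
  rcases eq_or_ne i 1 with h1 | h1
  · subst h1
    rw [Cfun_one m hm r _ hi, Cinv_one m hm r y hi]
  rcases eq_or_ne i (m - 1) with hl | hl
  · subst hl
    rw [Cfun_last m hm r _ hi, Cinv_zero m hm r y (by omega)]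
  · have hi1 : i + 1 < m := by omega
    rw [show (⟨i, hi⟩ : Fin m) = ⟨i, by omega⟩ from rfl,
      Cfun_mid m hm r _ i (by omega) hi1,
      Cinv_ge3 m hm r y (i + 1) (by omega) hi1]
    simp only [Nat.add_sub_cancel]
    rw [mul_inv_cancel_left₀ (pow_ne_zero _ hr)]

/-- The contracting family, as linear equivalences (junk value at `r = 0`). -/
def Cequiv (m : ℕ) (hm : 3 ≤ m) (r : ℝ) : (Fin m → ℝ) ≃ₗ[ℝ] (Fin m → ℝ) :=
  if hr : r = 0 then LinearEquiv.refl ℝ _ else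
  { toFun := Cfun m hm r
    map_add' := by
      intro x y; funext i
      simp only [Cfun, Pi.add_apply]
      split_ifs <;> ring
    map_smul' := by
      intro c x; funext i
      simp only [Cfun, Pi.smul_apply, smul_eq_mul, RingHom.id_apply]
      split_ifs <;> ring
    invFun := Cinv m hm r
    left_inv := Cfun_left_inv m hm r hr
    right_inv := Cfun_right_inv m hm r hr }

lemma Cequiv_apply (m : ℕ) (hm : 3 ≤ m) (r : ℝ) (hr : r ≠ 0) (x : Fin m → ℝ) :
    Cequiv m hm r x = Cfun m hm r x := by
  simp only [Cequiv, dif_neg hr]; rfl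

lemma Cequiv_symm_apply (m : ℕ) (hm : 3 ≤ m) (r : ℝ) (hr : r ≠ 0) (y : Fin m → ℝ) :
    (Cequiv m hm r).symm y = Cinv m hm r y := by
  simp only [Cequiv, dif_neg hr]; rfl

lemma bval_lt (m : ℕ) (hm : 3 ≤ m) (r : ℝ) (x y : Fin m → ℝ) (i : ℕ) (h : i + 2 < m) :
    filiformBracket m (Cfun m hm r x) (Cfun m hm r y) ⟨i, by omega⟩ =
      x ⟨0, by omega⟩ * Cfun m hm r y ⟨i + 1, by omega⟩ -
        y ⟨0, by omega⟩ * Cfun m hm r x ⟨i + 1, by omega⟩ := by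
  simp only [filiformBracket, Fin.val_mk]
  rw [dif_pos h, Cfun_last m hm r x (by omega), Cfun_last m hm r y (by omega)]

lemma bval_top (m : ℕ) (hm : 3 ≤ m) (r : ℝ) (x y : Fin m → ℝ) (i : ℕ) (hi : i < m)
    (h : ¬ (i + 2 < m)) :
    filiformBracket m (Cfun m hm r x) (Cfun m hm r y) ⟨i, hi⟩ = 0 := by
  simp only [filiformBracket, Fin.val_mk]
  rw [dif_neg h]

lemma heis_ne (m k : ℕ) (x y : Fin m → ℝ) (i : ℕ) (hi : i < m) (h : i ≠ 2 * k) :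
    heisenbergProdBracket m k x y ⟨i, hi⟩ = 0 := by
  simp only [heisenbergProdBracket, Fin.val_mk]
  rw [dif_neg (fun hc => h hc.1)]

lemma heis_two (m : ℕ) (hm : 3 ≤ m) (x y : Fin m → ℝ) (h2 : 2 < m) :
    heisenbergProdBracket m 1 x y ⟨2, h2⟩ =
      x ⟨0, by omega⟩ * y ⟨1, by omega⟩ - x ⟨1, by omega⟩ * y ⟨0, by omega⟩ := by
  simp only [heisenbergProdBracket, Fin.val_mk, eq_self_iff_true, true_and,
    Nat.reduceMul]
  rw [dif_pos (by omega : 2 * 1 < m), Fin.sum_univ_one]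
  norm_num

lemma contraction_k1 (m : ℕ) (hm : 3 ≤ m) :
    IsContractionOf (filiformBracket m) (heisenbergProdBracket m 1) := by
  have hset : (Set.univ : Set ℝ) \ {0} = {(0 : ℝ)}ᶜ := by
    ext t; simp
  refine ⟨Set.univ, ?_, Cequiv m hm, ?_⟩
  · rw [hset]; infer_instance
  intro x y
  rw [hset, tendsto_pi_nhds]
  intro j
  obtain ⟨j, hj⟩ := j
  have hmem : ∀ᶠ r in 𝓝[≠] (0 : ℝ), r ≠ 0 :=
    eventually_mem_nhdsWithin.mono (fun r hr => hr)
  rcases Nat.lt_or_ge j 3 with h3 | h3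
  · interval_cases j
    · -- j = 0
      rw [heis_ne m 1 x y 0 hj (by omega)]
      refine Tendsto.congr' ?_ tendsto_const_nhds
      filter_upwards [hmem] with r hr
      rw [Cequiv_symm_apply m hm r hr, Cequiv_apply m hm r hr, Cequiv_apply m hm r hr,
        Cinv_zero m hm r _ hj, bval_top m hm r x y (m - 1) (by omega) (by omega)]
    · -- j = 1
      rw [heis_ne m 1 x y 1 hj (by omega)]
      rcases Nat.lt_or_ge 3 m with hm4 | hm4
      · have key : Tendsto (fun r : ℝ =>
            r ^ 3 * (x ⟨0, by omega⟩ * y ⟨3, by omega⟩ - y ⟨0, by omega⟩ * x ⟨3, by omega⟩))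
            (𝓝[≠] (0 : ℝ)) (𝓝 0) := by
          have hc : Continuous (fun r : ℝ =>
              r ^ 3 * (x ⟨0, by omega⟩ * y ⟨3, by omega⟩ -
                y ⟨0, by omega⟩ * x ⟨3, by omega⟩)) := by continuity
          have := (hc.tendsto 0).mono_left (nhdsWithin_le_nhds (s := {(0:ℝ)}ᶜ))
          simpa using this
        refine Tendsto.congr' ?_ key
        filter_upwards [hmem] with r hr
        rw [Cequiv_symm_apply m hm r hr, Cequiv_apply m hm r hr, Cequiv_apply m hm r hr,
          Cinv_one m hm r _ hj, bval_lt m hm r x y 1 (by omega),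
          Cfun_mid m hm r y 2 (by norm_num) (by omega),
          Cfun_mid m hm r x 2 (by norm_num) (by omega)]
        ring
      · -- m = 3
        refine Tendsto.congr' ?_ tendsto_const_nhds
        filter_upwards [hmem] with r hr
        rw [Cequiv_symm_apply m hm r hr, Cequiv_apply m hm r hr, Cequiv_apply m hm r hr,
          Cinv_one m hm r _ hj, bval_top m hm r x y 1 (by omega) (by omega)]
    · -- j = 2
      rw [heis_two m hm x y hj]
      refine Tendsto.congr' ?_ tendsto_const_nhds
      filter_upwards [hmem] with r hr
      rw [Cequiv_symm_apply m hm r hr, Cequiv_apply m hm r hr, Cequiv_apply m hm r hr,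
        Cinv_two m hm r _ hj, bval_lt m hm r x y 0 (by omega),
        Cfun_one m hm r y (by omega), Cfun_one m hm r x (by omega)]
      ring
  · -- j ≥ 3
    rw [heis_ne m 1 x y j hj (by omega)]
    rcases Nat.lt_or_ge (j + 1) m with hjm | hjm
    · have key : Tendsto (fun r : ℝ =>
          r * (x ⟨0, by omega⟩ * y ⟨j + 1, hjm⟩ - y ⟨0, by omega⟩ * x ⟨j + 1, hjm⟩))
          (𝓝[≠] (0 : ℝ)) (𝓝 0) := by
        have hc : Continuous (fun r : ℝ =>
            r * (x ⟨0, by omega⟩ * y ⟨j + 1, hjm⟩ - y ⟨0, by omega⟩ * x ⟨j + 1, hjm⟩)) := by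
          continuity
        have := (hc.tendsto 0).mono_left (nhdsWithin_le_nhds (s := {(0:ℝ)}ᶜ))
        simpa using this
      refine Tendsto.congr' ?_ key
      filter_upwards [hmem] with r hr
      rw [Cequiv_symm_apply m hm r hr, Cequiv_apply m hm r hr, Cequiv_apply m hm r hr,
        Cinv_ge3 m hm r _ j h3 hj, bval_lt m hm r x y (j - 1) (by omega)]
      simp only [show j - 1 + 1 = j from by omega]
      rw [Cfun_mid m hm r y j (by omega) (by omega),
        Cfun_mid m hm r x j (by omega) (by omega)]
      have hpow : (r ^ j)⁻¹ * r ^ (j + 1) = r := by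
        rw [pow_succ, inv_mul_cancel_left₀ (pow_ne_zero _ hr)]
      symm
      calc (r ^ j)⁻¹ *
            (x ⟨0, by omega⟩ * (r ^ (j + 1) * y ⟨j + 1, by omega⟩) -
              y ⟨0, by omega⟩ * (r ^ (j + 1) * x ⟨j + 1, by omega⟩))
          = ((r ^ j)⁻¹ * r ^ (j + 1)) *
            (x ⟨0, by omega⟩ * y ⟨j + 1, by omega⟩ -
              y ⟨0, by omega⟩ * x ⟨j + 1, by omega⟩) := by ring
        _ = r * (x ⟨0, by omega⟩ * y ⟨j + 1, hjm⟩ -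
              y ⟨0, by omega⟩ * x ⟨j + 1, hjm⟩) := by rw [hpow]
    · -- j = m - 1
      refine Tendsto.congr' ?_ tendsto_const_nhds
      filter_upwards [hmem] with r hr
      rw [Cequiv_symm_apply m hm r hr, Cequiv_apply m hm r hr, Cequiv_apply m hm r hr,
        Cinv_ge3 m hm r _ j h3 hj,
        bval_top m hm r x y (j - 1) (by omega) (by omega), mul_zero]

/-! ### The obstruction for `k ≥ 2` -/

/-- Characteristic vector of a coordinate. -/
def chi (m : ℕ) (a : ℕ) : Fin m → ℝ := fun t => if (t : ℕ) = a then 1 else 0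

lemma heisVal (m k : ℕ) (a b : ℕ) (hkm : 2 * k < m) :
    heisenbergProdBracket m k (chi m a) (chi m b) ⟨2 * k, hkm⟩ =
      ∑ j : Fin k,
        ((if (j : ℕ) = a then (1 : ℝ) else 0) * (if k + (j : ℕ) = b then 1 else 0) -
          (if k + (j : ℕ) = a then (1 : ℝ) else 0) * (if (j : ℕ) = b then 1 else 0)) := by
  simp only [heisenbergProdBracket, chi, Fin.val_mk, eq_self_iff_true, true_and]
  rw [dif_pos hkm]

lemma heisVal_one (m k : ℕ) (hk : 2 ≤ k) (hkm : 2 * k < m) (a : ℕ) (ha : a < k) :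
    heisenbergProdBracket m k (chi m a) (chi m (k + a)) ⟨2 * k, hkm⟩ = 1 := by
  rw [heisVal m k a (k + a) hkm]
  rw [Fintype.sum_eq_single (⟨a, ha⟩ : Fin k)]
  · simp only [Fin.val_mk, eq_self_iff_true, if_true]
    rw [if_neg (by omega : ¬(k + a = a)), if_neg (by omega : ¬(a = k + a))]
    norm_num
  · intro j hj
    have hja : (j : ℕ) ≠ a := fun h => hj (Fin.ext h)
    have := j.isLt
    rw [if_neg hja, if_neg (by omega), if_neg (by omega)]
    ring

lemma heisVal_zero (m k : ℕ) (hk : 2 ≤ k) (hkm : 2 * k < m) (a b : ℕ)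
    (h : ∀ j : ℕ, j < k → ¬((j = a ∧ k + j = b) ∨ (k + j = a ∧ j = b))) :
    heisenbergProdBracket m k (chi m a) (chi m b) ⟨2 * k, hkm⟩ = 0 := by
  rw [heisVal m k a b hkm]
  apply Finset.sum_eq_zero
  intro j _
  have hj := j.isLt
  have := h (j : ℕ) hj
  split_ifs <;> first | exact absurd (by omega) this | norm_num

end ContractionAux

lemma no_contraction_of_two_le (m k : ℕ) (hk : 2 ≤ k) (hkm : 2 * k < m) :
    ¬ IsContractionOf (filiformBracket m) (heisenbergProdBracket m k) := by
  rintro ⟨I, hne, C, hC⟩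
  haveI := hne
  have hm : 3 ≤ m := by omega
  set L := 𝓝[I \ {0}] (0 : ℝ) with hL
  set i2k : Fin m := ⟨2 * k, hkm⟩ with hi2k
  set g : (Fin m → ℝ) → (Fin m → ℝ) → ℝ → ℝ := fun a b r =>
    ((C r).symm (filiformBracket m (C r a) (C r b))) i2k with hg
  have key : ∀ a b : Fin m → ℝ,
      Tendsto (g a b) L (𝓝 (heisenbergProdBracket m k a b i2k)) := by
    intro a b
    exact ((continuous_apply i2k).tendsto _).comp (hC a b)
  -- the Plücker identity holds identically for the filiform bracket
  have identZero : ∀ (a b c d : Fin m → ℝ) (r : ℝ),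
      g a b r * g c d r - g a c r * g b d r + g a d r * g b c r = 0 := by
    intro a b c d r
    have hform : ∀ u v : Fin m → ℝ,
        ((C r).symm (filiformBracket m u v)) i2k =
          u ⟨m - 1, by omega⟩ * ((C r).symm (shiftMap m v)) i2k -
            v ⟨m - 1, by omega⟩ * ((C r).symm (shiftMap m u)) i2k := by
      intro u v
      rw [filiform_eq m hm u v, map_sub, map_smul, map_smul]
      simp [Pi.sub_apply, Pi.smul_apply, smul_eq_mul]
    simp only [hg, hform]
    ring
  -- evaluate the limit on suitable basis vectors
  set vx := chi m 0 with hvx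
  set vy := chi m k with hvy
  set vz := chi m 1 with hvz
  set vw := chi m (k + 1) with hvw
  have hxy : heisenbergProdBracket m k vx vy i2k = 1 := by
    have := heisVal_one m k hk hkm 0 (by omega)
    simpa using this
  have hzw : heisenbergProdBracket m k vz vw i2k = 1 := by
    have := heisVal_one m k hk hkm 1 (by omega)
    simpa using this
  have hxz : heisenbergProdBracket m k vx vz i2k = 0 :=
    heisVal_zero m k hk hkm 0 1 (by omega)
  have hyw : heisenbergProdBracket m k vy vw i2k = 0 :=
    heisVal_zero m k hk hkm k (k + 1) (by omega)
  have hxw : heisenbergProdBracket m k vx vw i2k = 0 :=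
    heisVal_zero m k hk hkm 0 (k + 1) (by omega)
  have hyz : heisenbergProdBracket m k vy vz i2k = 0 :=
    heisVal_zero m k hk hkm k 1 (by omega)
  have t1 : Tendsto (fun r =>
      g vx vy r * g vz vw r - g vx vz r * g vy vw r + g vx vw r * g vy vz r) L (𝓝 1) := by
    have := (((key vx vy).mul (key vz vw)).sub ((key vx vz).mul (key vy vw))).add
      ((key vx vw).mul (key vy vz))
    rw [hxy, hzw, hxz, hyw, hxw, hyz] at this
    norm_num at this
    exact this
  have t2 : Tendsto (fun r =>
      g vx vy r * g vz vw r - g vx vz r * g vy vw r + g vx vw r * g vy vz r) L (𝓝 0) := by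
    simp only [identZero]
    exact tendsto_const_nhds
  have : (0 : ℝ) = 1 := tendsto_nhds_unique t2 t1
  norm_num at this

/-- Let `m ≥ n ≥ 3` with `n = 2k + 1` odd.  Then `f_m ⇝ h_n × a_{m-n}` if and only if
`n = 3`. -/
theorem filiform_contracts_to_heisenberg_iff (m n k : ℕ)
    (hn : 3 ≤ n) (hnm : n ≤ m) (hodd : n = 2 * k + 1) :
    IsContractionOf (filiformBracket m) (heisenbergProdBracket m k) ↔ n = 3 := by
  constructor
  · intro h
    by_contra hn3
    have hk : 2 ≤ k := by omega
    exact no_contraction_of_two_le m k hk (by omega) h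
  · intro h
    have hk1 : k = 1 := by omega
    subst hk1
    exact contraction_k1 m (by omega)
end

section
/- Let T, S : ℝⁿ → ℝⁿ be nonzero linear maps. If the Lie algebras g_T and g_S are isomorphic, then S ∈ C(T) \ {0}, i.e., there exist a nonzero scalar λ ∈ ℝ and an invertible linear map A : ℝⁿ → ℝⁿ such that S = λ·A T A⁻¹. -/
open Filter Topology

/-- The bracket of the semidirect product Lie algebra `g_T = ℝ ⋉_T ℝⁿ`:
`[(a, v), (b, w)] = (0, a • T w - b • T v)`. -/
noncomputable def gTBracket {n : ℕ} (T : Matrix (Fin n) (Fin n) ℝ) :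
    (ℝ × (Fin n → ℝ)) → (ℝ × (Fin n → ℝ)) → (ℝ × (Fin n → ℝ)) :=
  fun x y => (0, x.1 • T.mulVec y.2 - y.1 • T.mulVec x.2)

/-- The similarity orbit `S(T) = {A T A⁻¹ : A ∈ GL(n, ℝ)}`. -/
def simOrbit {n : ℕ} (T : Matrix (Fin n) (Fin n) ℝ) : Set (Matrix (Fin n) (Fin n) ℝ) :=
  {S | ∃ A : Matrix (Fin n) (Fin n) ℝ, IsUnit A ∧ S = A * T * A⁻¹}

/-- The double cone `C(T) = ⋃_{λ ∈ ℝ} λ • S(T)` generated by the similarity orbit. -/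
def doubleCone {n : ℕ} (T : Matrix (Fin n) (Fin n) ℝ) : Set (Matrix (Fin n) (Fin n) ℝ) :=
  {S | ∃ lam : ℝ, ∃ X ∈ simOrbit T, S = lam • X}

/-- The two brackets are isomorphic as Lie algebras: there is an invertible linear map
intertwining them. -/
def BracketIso {V W : Type*} [AddCommGroup V] [Module ℝ V] [AddCommGroup W] [Module ℝ W]
    (bv : V → V → V) (bw : W → W → W) : Prop :=
  ∃ D : V ≃ₗ[ℝ] W, ∀ x y : V, D (bv x y) = bw (D x) (D y)


/-!
The ideal `{0} × ℝⁿ` of `g_T` is abelian of codimension one. If an isomorphism `D : g_T → g_S`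
maps it into the corresponding ideal of `g_S`, then `D` restricts to a linear automorphism `g`
of `ℝⁿ` with `g T = α S g`, where `α ≠ 0` is the first coordinate of `D (1, 0)`; hence
`S = α⁻¹ g T g⁻¹`. Otherwise the first coordinate `f` of `D` on `ℝⁿ` is a nonzero functional,
and comparing `D [(1, 0), (0, w)]` with `[D (1, 0), D (0, w)]` shows `T w = f w • p` for a fixed
`p` with `f p = 0`: `T` is a rank-one nilpotent. Running this dichotomy on `D` and on an
isomorphism `g_S → g_T`, either one of `T`, `S` is a nonzero multiple of a conjugate of the
other, or both are nonzero rank-one nilpotents, and any two of those are conjugate.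
-/

open Module

section SplitSurjection

variable {K V W M : Type*} [Field K] [AddCommGroup V] [Module K V] [AddCommGroup W] [Module K W]
  [AddCommGroup M] [Module K M]

theorem finrank_ker_add_of_comp_eq_id [FiniteDimensional K V] {Φ : V →ₗ[K] M}
    {s : M →ₗ[K] V} (hs : Φ ∘ₗ s = LinearMap.id) :
    finrank K (LinearMap.ker Φ) + finrank K M = finrank K V := by
  have hΦ : LinearMap.range Φ = ⊤ := LinearMap.range_eq_top.mpr fun m => ⟨s m, congr($hs m)⟩
  rw [← Φ.finrank_range_add_finrank_ker, hΦ, finrank_top, add_comm]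

theorem exists_linearEquiv_comp_eq_of_comp_eq_id [FiniteDimensional K V] [FiniteDimensional K W]
    (hVW : finrank K V = finrank K W) {Φ : V →ₗ[K] M} {Ψ : W →ₗ[K] M} {s : M →ₗ[K] V}
    {t : M →ₗ[K] W} (hs : Φ ∘ₗ s = LinearMap.id) (ht : Ψ ∘ₗ t = LinearMap.id) :
    ∃ e : V ≃ₗ[K] W, Ψ ∘ₗ e = Φ ∧ e ∘ₗ s = t := by
  have hs' (m : M) : Φ (s m) = m := congr($hs m)
  have ht' (m : M) : Ψ (t m) = m := congr($ht m)
  have hker : finrank K (LinearMap.ker Φ) = finrank K (LinearMap.ker Ψ) := by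
    have := finrank_ker_add_of_comp_eq_id hs
    have := finrank_ker_add_of_comp_eq_id ht
    omega
  let k := LinearEquiv.ofFinrankEq (LinearMap.ker Φ) (LinearMap.ker Ψ) hker
  let π : V →ₗ[K] LinearMap.ker Φ :=
    (LinearMap.id - s ∘ₗ Φ).codRestrict (LinearMap.ker Φ) fun x => by simp [hs']
  let e : V →ₗ[K] W := t ∘ₗ Φ + (LinearMap.ker Ψ).subtype ∘ₗ k.toLinearMap ∘ₗ π
  have hΨe : Ψ ∘ₗ e = Φ := by
    ext x
    simp [e, ht', LinearMap.mem_ker.mp (k (π x)).2]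
  have hes : e ∘ₗ s = t := by
    ext m
    have hπs : π (s m) = 0 := Subtype.ext (by simp [π, hs'])
    simp [e, hs', hπs]
  have he : Function.Injective e := by
    refine (injective_iff_map_eq_zero e).mpr fun x hx => ?_
    have hΦx : Φ x = 0 := by rw [← hΨe, LinearMap.comp_apply, hx, map_zero]
    have hπx : π x = 0 := by simpa [e, hΦx] using hx
    simpa [π, hΦx] using congr(($hπx : V))
  exact ⟨e.linearEquivOfInjective he hVW, hΨe, hes⟩

end SplitSurjection

namespace Module.Dual

variable {K V W : Type*} [Field K] [AddCommGroup V] [Module K V] [AddCommGroup W] [Module K W]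

theorem exists_prod_comp_eq_id_of_apply_eq_zero [FiniteDimensional K V] {f : Dual K V}
    {p : V} (hf : f ≠ 0) (hp : p ≠ 0) (hfp : f p = 0) :
    ∃ (ξ : Dual K V) (s : K × K →ₗ[K] V), f.prod ξ ∘ₗ s = LinearMap.id ∧ s (0, 1) = p := by
  obtain ⟨v, hv⟩ := DFunLike.ne_iff.mp hf
  obtain ⟨ξ₀, hξ₀⟩ := Projective.exists_dual_eq_one K hp
  set b := (f v)⁻¹ • v
  have hfb : f b = 1 := by simp [b, inv_mul_cancel₀ (by simpa using hv)]
  refine ⟨ξ₀ - ξ₀ b • f, (LinearMap.fst K K K).smulRight b + (LinearMap.snd K K K).smulRight p,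
    ?_, by simp⟩
  ext <;> simp [hfb, hfp, hξ₀]

theorem exists_linearEquiv_apply_eq_of_apply_eq_zero [FiniteDimensional K V]
    [FiniteDimensional K W] (hVW : finrank K V = finrank K W) {f : Dual K V} {g : Dual K W}
    {p : V} {q : W} (hf : f ≠ 0) (hg : g ≠ 0) (hp : p ≠ 0) (hq : q ≠ 0) (hfp : f p = 0)
    (hgq : g q = 0) : ∃ e : V ≃ₗ[K] W, e p = q ∧ g ∘ₗ e = f := by
  obtain ⟨ξ, s, hs, hsp⟩ := f.exists_prod_comp_eq_id_of_apply_eq_zero hf hp hfp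
  obtain ⟨η, t, ht, htq⟩ := g.exists_prod_comp_eq_id_of_apply_eq_zero hg hq hgq
  obtain ⟨e, hΨe, hes⟩ := exists_linearEquiv_comp_eq_of_comp_eq_id hVW hs ht
  refine ⟨e, by rw [← hsp, ← htq, ← hes]; rfl, ?_⟩
  exact LinearMap.ext fun x => congr(($hΨe x).1)

end Module.Dual

namespace Matrix

variable {ι K : Type*} [Fintype ι] [DecidableEq ι] [Field K]

def IsScaledConj (T S : Matrix ι ι K) : Prop :=
  ∃ (c : K) (A : Matrix ι ι K), c ≠ 0 ∧ IsUnit A ∧ S = c • (A * T * A⁻¹)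

theorem IsScaledConj.symm {T S : Matrix ι ι K} (h : T.IsScaledConj S) : S.IsScaledConj T := by
  obtain ⟨c, A, hc, hA, rfl⟩ := h
  have hdet : IsUnit A.det := (isUnit_iff_isUnit_det A).mp hA
  refine ⟨c⁻¹, A⁻¹, inv_ne_zero hc, isUnit_nonsing_inv_iff.mpr hA, ?_⟩
  rw [nonsing_inv_nonsing_inv A hdet, Matrix.mul_smul, Matrix.smul_mul, smul_smul,
    inv_mul_cancel₀ hc, one_smul, ← Matrix.mul_assoc, ← Matrix.mul_assoc, nonsing_inv_mul A hdet,
    Matrix.one_mul, Matrix.mul_assoc, nonsing_inv_mul A hdet, Matrix.mul_one]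

theorem isScaledConj_of_linearEquiv {T S : Matrix ι ι K} (e : (ι → K) ≃ₗ[K] (ι → K))
    {c : K} (hc : c ≠ 0) (h : ∀ x, S *ᵥ e x = c • e (T *ᵥ x)) : T.IsScaledConj S := by
  have hAinv : (LinearMap.toMatrix' e.toLinearMap)⁻¹ = LinearMap.toMatrix' e.symm.toLinearMap :=
    inv_eq_right_inv <| by
      rw [← LinearMap.toMatrix'_comp, LinearEquiv.comp_coe, e.symm_trans_self]
      exact LinearMap.toMatrix'_id
  refine ⟨c, LinearMap.toMatrix' e.toLinearMap, hc,
    LinearMap.isUnit_toMatrix'_iff.mpr ((End.isUnit_iff _).mpr e.bijective),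
    ext_iff_mulVec.mpr fun x => ?_⟩
  rw [hAinv, smul_mulVec, ← mulVec_mulVec, ← mulVec_mulVec, LinearMap.toMatrix'_mulVec,
    LinearMap.toMatrix'_mulVec, LinearEquiv.coe_coe, LinearEquiv.coe_coe, ← h, e.apply_symm_apply]

/-- Equivalently, `T` has rank one and `T ^ 2 = 0`. -/
def IsRankOneNilpotent (T : Matrix ι ι K) : Prop :=
  ∃ (f : Dual K (ι → K)) (p : ι → K), f ≠ 0 ∧ p ≠ 0 ∧ f p = 0 ∧ ∀ x, T *ᵥ x = f x • p

theorem IsRankOneNilpotent.isScaledConj {T S : Matrix ι ι K} (hT : T.IsRankOneNilpotent)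
    (hS : S.IsRankOneNilpotent) : T.IsScaledConj S := by
  obtain ⟨f, p, hf, hp, hfp, hTx⟩ := hT
  obtain ⟨g, q, hg, hq, hgq, hSx⟩ := hS
  obtain ⟨e, hep, hge⟩ := f.exists_linearEquiv_apply_eq_of_apply_eq_zero rfl hf hg hp hq hfp hgq
  refine isScaledConj_of_linearEquiv e one_ne_zero fun x => ?_
  rw [hSx, hTx, one_smul, map_smul, hep, ← hge, LinearMap.comp_apply, LinearEquiv.coe_coe]

end Matrix

theorem BracketIso.symm {V W : Type*} [AddCommGroup V] [Module ℝ V] [AddCommGroup W]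
    [Module ℝ W] {bv : V → V → V} {bw : W → W → W} (h : BracketIso bv bw) : BracketIso bw bv := by
  obtain ⟨D, hD⟩ := h
  refine ⟨D.symm, fun x y => D.injective ?_⟩
  rw [hD, D.apply_symm_apply, D.apply_symm_apply, D.apply_symm_apply]

/-! In this section `(0, v)` ranges over the abelian ideal `ℝⁿ` of `g_T`, and the hypothesis
`∀ v, (D (0, v)).1 = 0` says that `D` maps it into the ideal `ℝⁿ` of `g_S`. -/
section SemidirectProduct

open Matrix

variable {n : ℕ} {T S : Matrix (Fin n) (Fin n) ℝ}

theorem gTBracket_zero_zero (v w : Fin n → ℝ) : gTBracket T (0, v) (0, w) = 0 := by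
  simp [gTBracket]

theorem map_zero_mulVec_eq_gTBracket (D : (ℝ × (Fin n → ℝ)) ≃ₗ[ℝ] (ℝ × (Fin n → ℝ)))
    (hD : ∀ x y, D (gTBracket T x y) = gTBracket S (D x) (D y)) (w : Fin n → ℝ) :
    D (0, T *ᵥ w) = gTBracket S (D (1, 0)) (D (0, w)) := by
  rw [← hD]
  simp [gTBracket]

theorem isScaledConj_of_map_ideal_le (D : (ℝ × (Fin n → ℝ)) ≃ₗ[ℝ] (ℝ × (Fin n → ℝ)))
    (hD : ∀ x y, D (gTBracket T x y) = gTBracket S (D x) (D y)) (hf : ∀ v, (D (0, v)).1 = 0) :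
    T.IsScaledConj S := by
  set α := (D (1, 0)).1
  let g : (Fin n → ℝ) →ₗ[ℝ] (Fin n → ℝ) :=
    LinearMap.snd ℝ ℝ _ ∘ₗ D.toLinearMap ∘ₗ LinearMap.inr ℝ ℝ _
  have hDg (v : Fin n → ℝ) : D (0, v) = (0, g v) := Prod.ext (hf v) rfl
  have hfst (y : ℝ × (Fin n → ℝ)) : (D y).1 = y.1 * α := by
    have hy : y = y.1 • ((1 : ℝ), (0 : Fin n → ℝ)) + (0, y.2) := by simp
    rw [hy, map_add, map_smul]
    simp [hf, α]
  have hα : α ≠ 0 := by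
    intro hα
    obtain ⟨x, hx⟩ := D.surjective (1, 0)
    simpa [hα, hx] using hfst x
  have hg : Function.Injective g := fun v w hvw =>
    congr(($(D.injective (by rw [hDg, hDg, hvw] : D (0, v) = D (0, w)))).2)
  have hgT (w : Fin n → ℝ) : g (T *ᵥ w) = α • S *ᵥ g w := by
    simpa [hDg, gTBracket] using congr(($(map_zero_mulVec_eq_gTBracket D hD w)).2)
  refine isScaledConj_of_linearEquiv (.ofInjectiveEndo g hg) (inv_ne_zero hα) fun x => ?_
  rw [LinearEquiv.coe_ofInjectiveEndo, hgT, smul_smul, inv_mul_cancel₀ hα, one_smul]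

theorem isRankOneNilpotent_of_not_map_ideal_le (D : (ℝ × (Fin n → ℝ)) ≃ₗ[ℝ] (ℝ × (Fin n → ℝ)))
    (hD : ∀ x y, D (gTBracket T x y) = gTBracket S (D x) (D y)) (hT : T ≠ 0)
    (hf : ¬ ∀ v, (D (0, v)).1 = 0) : T.IsRankOneNilpotent := by
  let f : Dual ℝ (Fin n → ℝ) := LinearMap.fst ℝ ℝ _ ∘ₗ D.toLinearMap ∘ₗ LinearMap.inr ℝ ℝ _
  have hfD (v : Fin n → ℝ) : (D (0, v)).1 = f v := rfl
  have hf0 : f ≠ 0 := fun h => hf fun v => congr($h v)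
  obtain ⟨w₀, hw₀⟩ : ∃ w₀, f w₀ = 1 := by
    obtain ⟨v, hv⟩ := DFunLike.ne_iff.mp hf0
    exact ⟨(f v)⁻¹ • v, by simp [inv_mul_cancel₀ (by simpa using hv)]⟩
  -- `D (0, v)` and `D (0, w₀)` commute
  have hSD (v : Fin n → ℝ) : S *ᵥ (D (0, v)).2 = f v • S *ᵥ (D (0, w₀)).2 := by
    have h := congr(($(hD (0, v) (0, w₀))).2)
    rw [gTBracket_zero_zero, map_zero] at h
    simp only [gTBracket, Prod.snd_zero, hfD, hw₀, one_smul] at h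
    exact (sub_eq_zero.mp h.symm).symm
  set c := (D (1, 0)).1 • S *ᵥ (D (0, w₀)).2 - S *ᵥ (D (1, 0)).2
  have hDT (w : Fin n → ℝ) : D (0, T *ᵥ w) = f w • ((0 : ℝ), c) := by
    rw [map_zero_mulVec_eq_gTBracket D hD]
    refine Prod.ext ?_ ?_
    · simp [gTBracket]
    · simp only [gTBracket, Prod.smul_snd, hfD, c]
      rw [hSD]
      module
  set p := (D.symm (0, c)).2
  have hTp (w : Fin n → ℝ) : T *ᵥ w = f w • p := by
    have h := congr((D.symm $(hDT w)).2)
    rwa [D.symm_apply_apply, map_smul] at h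
  refine ⟨f, p, hf0, fun hp => hT ?_, ?_, hTp⟩
  · exact ext_iff_mulVec.mpr fun v => by simp [hTp, hp]
  · show (D (0, p)).1 = 0
    simpa [hTp w₀, hw₀] using congr(($(hDT w₀)).1)

theorem isScaledConj_or_isRankOneNilpotent (hT : T ≠ 0)
    (h : BracketIso (gTBracket T) (gTBracket S)) : T.IsScaledConj S ∨ T.IsRankOneNilpotent := by
  obtain ⟨D, hD⟩ := h
  by_cases hf : ∀ v, (D (0, v)).1 = 0
  · exact .inl (isScaledConj_of_map_ideal_le D hD hf)
  · exact .inr (isRankOneNilpotent_of_not_map_ideal_le D hD hT hf)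

end SemidirectProduct

/-- If `T, S ≠ 0` and the Lie algebras `g_T` and `g_S` are isomorphic, then
`S ∈ C(T) \ {0}`: there are `λ ≠ 0` and an invertible `A` with `S = λ • A T A⁻¹`. -/
theorem mem_doubleCone_of_bracketIso {n : ℕ} (T S : Matrix (Fin n) (Fin n) ℝ)
    (hT : T ≠ 0) (hS : S ≠ 0) (h : BracketIso (gTBracket T) (gTBracket S)) :
    ∃ (lam : ℝ) (A : Matrix (Fin n) (Fin n) ℝ),
      lam ≠ 0 ∧ IsUnit A ∧ S = lam • (A * T * A⁻¹) := by
  rcases isScaledConj_or_isRankOneNilpotent hT h with hTS | hT₁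
  · exact hTS
  rcases isScaledConj_or_isRankOneNilpotent hS h.symm with hST | hS₁
  · exact hST.symm
  · exact hT₁.isScaledConj hS₁
end

section
/- Let T, S : ℝⁿ → ℝⁿ be nonzero linear maps. If g_T ⇝ g_S (g_S is a contraction of g_T), then S lies in the closure of C(T) \ {0} in M_n(ℝ). -/
/-!
Write `C_r` in block form on `ℝ × ℝⁿ` and let `α_r` be the `ℝ`-coordinate of `C_r (1, 0)`. The
`ℝⁿ`-parts of `C_r⁻¹ [C_r (1, 0), C_r (0, w)]` are `Δ_r T K_r w` with `Δ_r K_r = K_r Δ_r = α_r • 1`,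
so `Δ_r T K_r → S`. If `α_r ≠ 0` frequently, `Δ_r T K_r = α_r • Δ_r T Δ_r⁻¹` lies in `C(T) \ {0}`.
Otherwise `K_r` has rank one and `(Δ_r T K_r)² = 0`, so `S` is a square-zero matrix of rank at
most one, and `S = 0` if `T` is scalar. Every such `S = x yᵀ` is a limit in `C(T) \ {0}`: take
`B ∈ S(T)` with `B u = x` where `y ⬝ᵥ u = 1`, conjugate `t • B` by the map scaling `u` by `t` and
fixing `ker y`, and let `t → 0`.
-/

open Filter Topology

open Matrix

section DoubleCone

variable {n : ℕ} {T X : Matrix (Fin n) (Fin n) ℝ}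

lemma self_mem_simOrbit (T : Matrix (Fin n) (Fin n) ℝ) : T ∈ simOrbit T :=
  ⟨1, isUnit_one, by simp⟩

lemma conj_mem_simOrbit {A : Matrix (Fin n) (Fin n) ℝ} (hX : X ∈ simOrbit T) (hA : IsUnit A) :
    A * X * A⁻¹ ∈ simOrbit T := by
  obtain ⟨B, hB, rfl⟩ := hX
  exact ⟨A * B, hA.mul hB, by simp only [Matrix.mul_inv_rev, mul_assoc]⟩

lemma ne_zero_of_mem_simOrbit (hT : T ≠ 0) (hX : X ∈ simOrbit T) : X ≠ 0 := by
  obtain ⟨A, hA, rfl⟩ := hX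
  have hA' := (Matrix.isUnit_iff_isUnit_det A).mp hA
  intro h
  apply hT
  calc T = A⁻¹ * (A * T * A⁻¹) * A := by
        simp only [mul_assoc, Matrix.nonsing_inv_mul A hA', mul_one,
          Matrix.nonsing_inv_mul_cancel_left A T hA']
    _ = 0 := by rw [h]; simp

lemma smul_mem_doubleCone_diff (hT : T ≠ 0) (hX : X ∈ simOrbit T) {c : ℝ} (hc : c ≠ 0) :
    c • X ∈ doubleCone T \ {0} :=
  ⟨⟨c, X, hX, rfl⟩, smul_ne_zero hc (ne_zero_of_mem_simOrbit hT hX)⟩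

lemma zero_mem_closure_doubleCone_diff (hT : T ≠ 0) : 0 ∈ closure (doubleCone T \ {0}) := by
  have hlim : Tendsto (fun t : ℝ => t • T) (𝓝[≠] 0) (𝓝 0) := by
    have hcont : Continuous (fun t : ℝ => t • T) := by fun_prop
    simpa using (hcont.tendsto 0).mono_left nhdsWithin_le_nhds
  exact mem_closure_of_tendsto hlim (eventually_mem_nhdsWithin.mono fun t ht =>
    smul_mem_doubleCone_diff hT (self_mem_simOrbit T) ht)

end DoubleCone

section ScalingLimit

variable {n : ℕ}

/-- With `D_t` scaling `u` by `t` and fixing `ker y`, `t • D_t B D_t⁻¹` is a polynomial in `t`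
whose value at `0` is `x yᵀ`. -/
lemma vecMulVec_mem_closure_doubleCone_diff {T B : Matrix (Fin n) (Fin n) ℝ} (hT : T ≠ 0)
    (hB : B ∈ simOrbit T) {u x y : Fin n → ℝ} (hBu : B *ᵥ u = x) (hyu : y ⬝ᵥ u = 1)
    (hyx : y ⬝ᵥ x = 0) : vecMulVec x y ∈ closure (doubleCone T \ {0}) := by
  set P := vecMulVec u y
  have hPP : P * P = P := by rw [vecMulVec_mul_vecMulVec, hyu, one_smul]
  let D : ℝ → Matrix (Fin n) (Fin n) ℝ := fun t => 1 + (t - 1) • P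
  have hD : ∀ t ≠ 0, D t * D t⁻¹ = 1 := by
    intro t ht
    have hcoef : (t - 1) + (t⁻¹ - 1) + (t - 1) * (t⁻¹ - 1) = 0 := by field_simp; ring
    calc D t * D t⁻¹ = 1 + ((t - 1) + (t⁻¹ - 1) + (t - 1) * (t⁻¹ - 1)) • P := by
          simp only [D, add_mul, mul_add, one_mul, mul_one, smul_mul_smul, hPP]
          module
      _ = 1 := by rw [hcoef, zero_smul, add_zero]
  let g : ℝ → Matrix (Fin n) (Fin n) ℝ := fun t =>
    t • B + (1 - t) • (B * P) + (t ^ 2 - t) • (P * B) - (1 - t) ^ 2 • (P * B * P)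
  have hg0 : g 0 = vecMulVec x y := by
    have hBP : B * P = vecMulVec x y := by rw [mul_vecMulVec, hBu]
    have hPxy : P * vecMulVec x y = 0 := by
      rw [vecMulVec_mul_vecMulVec, hyx, zero_smul]
      exact vecMulVec_zero u
    simp [g, mul_assoc, hBP, hPxy]
  have hg : ∀ t ≠ 0, g t = t • (D t * B * (D t)⁻¹) := by
    intro t ht
    have hinv : t • (D t)⁻¹ = t • 1 + (1 - t) • P := by
      rw [Matrix.inv_eq_right_inv (hD t ht), smul_add, smul_smul, mul_sub, mul_inv_cancel₀ ht,
        mul_one]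
    rw [← mul_smul_comm, hinv]
    simp only [g, D, add_mul, mul_add, one_mul, mul_one, smul_mul_assoc, mul_smul_comm,
      mul_assoc]
    module
  have hlim : Tendsto g (𝓝[≠] 0) (𝓝 (vecMulVec x y)) := by
    have hcont : Continuous g := by fun_prop
    simpa [hg0] using (hcont.tendsto 0).mono_left nhdsWithin_le_nhds
  refine mem_closure_of_tendsto hlim (eventually_mem_nhdsWithin.mono fun t ht => ?_)
  rw [hg t ht]
  exact smul_mem_doubleCone_diff hT
    (conj_mem_simOrbit hB (IsUnit.of_mul_eq_one _ (hD t ht))) ht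

end ScalingLimit

lemma LinearIndependent.exists_linearEquiv_apply_eq {K V ι : Type*} [DivisionRing K]
    [AddCommGroup V] [Module K V] [Finite ι] {v v' : ι → V} (hv : LinearIndependent K v)
    (hv' : LinearIndependent K v') : ∃ g : V ≃ₗ[K] V, ∀ i, g (v i) = v' i := by
  have := FiniteDimensional.span_of_finite K (Set.finite_range v)
  obtain ⟨g, hg⟩ := Submodule.exists_linearEquiv_restrict_eq
    ((Module.Basis.span hv).equiv (Module.Basis.span hv') (Equiv.refl ι))
  refine ⟨g, fun i => ?_⟩
  have hgi := hg (Module.Basis.span hv i)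
  rw [Module.Basis.equiv_apply, Module.Basis.span_apply, Module.Basis.span_apply] at hgi
  exact hgi.symm

section SimilarityOrbit

variable {n : ℕ} {T : Matrix (Fin n) (Fin n) ℝ}

lemma exists_linearIndependent_mulVec_of_ne_smul_one (hT : ∀ c : ℝ, T ≠ c • 1) :
    ∃ w, LinearIndependent ℝ ![w, T *ᵥ w] := by
  by_contra! h
  obtain ⟨c, hc⟩ := LinearMap.exists_eq_smul_id_of_forall_notLinearIndependent
    (f := T.mulVecLin) h
  apply hT c
  rw [← LinearMap.toMatrix'_toLin' T, Matrix.toLin'_apply', hc, map_smul,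
    LinearMap.toMatrix'_one]

lemma exists_mem_simOrbit_mulVec_eq (hT : ∀ c : ℝ, T ≠ c • 1) {u x : Fin n → ℝ}
    (hux : LinearIndependent ℝ ![u, x]) : ∃ B ∈ simOrbit T, B *ᵥ u = x := by
  obtain ⟨w, hw⟩ := exists_linearIndependent_mulVec_of_ne_smul_one hT
  obtain ⟨g, hg⟩ := hw.exists_linearEquiv_apply_eq hux
  have hA : LinearMap.toMatrix' g.toLinearMap * LinearMap.toMatrix' g.symm.toLinearMap = 1 := by
    rw [← LinearMap.toMatrix'_comp]; simp
  refine ⟨_, ⟨_, IsUnit.of_mul_eq_one _ hA, rfl⟩, ?_⟩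
  have hgu : g.symm u = w := g.symm_apply_eq.mpr (hg 0).symm
  rw [Matrix.inv_eq_right_inv hA, ← mulVec_mulVec, ← mulVec_mulVec, LinearMap.toMatrix'_mulVec,
    LinearMap.toMatrix'_mulVec]
  simpa [hgu] using hg 1

end SimilarityOrbit

section SquareZeroRankLeOne

variable {n : ℕ}

/-- Square-zero matrices of rank at most one, the rank condition being the vanishing of all
`2 × 2` minors. -/
def squareZeroRankLeOne (n : ℕ) : Set (Matrix (Fin n) (Fin n) ℝ) :=
  {A | A * A = 0 ∧ ∀ i j k l, A i j * A k l = A i l * A k j}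

lemma isClosed_squareZeroRankLeOne : IsClosed (squareZeroRankLeOne n) := by
  refine (isClosed_eq (by fun_prop) continuous_const).inter ?_
  show IsClosed {A : Matrix (Fin n) (Fin n) ℝ | ∀ i j k l, A i j * A k l = A i l * A k j}
  simp only [Set.ofPred_forall]
  exact isClosed_iInter fun i => isClosed_iInter fun j => isClosed_iInter fun k =>
    isClosed_iInter fun l => isClosed_eq (by fun_prop) (by fun_prop)

lemma exists_eq_vecMulVec_of_mem_squareZeroRankLeOne {A : Matrix (Fin n) (Fin n) ℝ}
    (hA : A ∈ squareZeroRankLeOne n) (hA0 : A ≠ 0) :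
    ∃ u x y : Fin n → ℝ, x ≠ 0 ∧ y ⬝ᵥ u = 1 ∧ y ⬝ᵥ x = 0 ∧ A = vecMulVec x y := by
  obtain ⟨a, b, hab⟩ : ∃ a b, A a b ≠ 0 := by
    by_contra! h
    exact hA0 (Matrix.ext h)
  refine ⟨Pi.single b 1, fun k => A k b, fun l => A a l / A a b, fun hx => hab (congrFun hx a),
    by simp [hab], ?_, ?_⟩
  · have hsq : ∑ l, A a l * A l b = 0 := by simpa [Matrix.mul_apply] using congrFun₂ hA.1 a b
    simp only [dotProduct, div_mul_eq_mul_div, ← Finset.sum_div, hsq, zero_div]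
  · ext k l
    rw [vecMulVec_apply, mul_div_assoc', eq_div_iff hab]
    linear_combination hA.2 a b k l

end SquareZeroRankLeOne

lemma mem_closure_doubleCone_diff_of_mem_squareZeroRankLeOne {n : ℕ}
    {T S : Matrix (Fin n) (Fin n) ℝ} (hT : ∀ c : ℝ, T ≠ c • 1) (hS : S ∈ squareZeroRankLeOne n) :
    S ∈ closure (doubleCone T \ {0}) := by
  have hT0 : T ≠ 0 := by simpa using hT 0
  rcases eq_or_ne S 0 with rfl | hS0
  · exact zero_mem_closure_doubleCone_diff hT0
  obtain ⟨u, x, y, hx, hyu, hyx, rfl⟩ := exists_eq_vecMulVec_of_mem_squareZeroRankLeOne hS hS0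
  have hux : LinearIndependent ℝ ![u, x] := by
    refine LinearIndependent.pair_iff.mpr fun s t hst => ?_
    have hs : s = 0 := by simpa [hyu, hyx] using congrArg (y ⬝ᵥ ·) hst
    subst hs
    exact ⟨rfl, (smul_eq_zero.mp (by simpa using hst)).resolve_right hx⟩
  obtain ⟨B, hB, hBu⟩ := exists_mem_simOrbit_mulVec_eq hT hux
  exact vecMulVec_mem_closure_doubleCone_diff hT0 hB hBu hyu hyx

/-! Write an automorphism `E` of `ℝ × ℝⁿ` in block form `E = [[α, βᵀ], [γ, Δ]]`. Then
`cornerSymm E` is the `ℝⁿ`-corner of `E⁻¹` and `schurCompl E = α Δ - γ βᵀ` is `α` times the Schur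
complement of `α`, so block inversion gives `cornerSymm E * schurCompl E = α • 1` even when
`α = 0`. -/
section BlockDecomposition

variable {n : ℕ} (E : (ℝ × (Fin n → ℝ)) ≃ₗ[ℝ] (ℝ × (Fin n → ℝ)))

noncomputable def cornerSymm : Matrix (Fin n) (Fin n) ℝ :=
  LinearMap.toMatrix' (LinearMap.snd ℝ ℝ _ ∘ₗ E.symm.toLinearMap ∘ₗ LinearMap.inr ℝ ℝ _)

noncomputable def schurCompl : Matrix (Fin n) (Fin n) ℝ :=
  LinearMap.toMatrix' ((E (1, 0)).1 • (LinearMap.snd ℝ ℝ _ ∘ₗ E.toLinearMap ∘ₗ LinearMap.inr ℝ ℝ _)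
    - LinearMap.toSpanSingleton ℝ _ (E (1, 0)).2 ∘ₗ
      (LinearMap.fst ℝ ℝ _ ∘ₗ E.toLinearMap ∘ₗ LinearMap.inr ℝ ℝ _))

lemma cornerSymm_mulVec (z : Fin n → ℝ) : cornerSymm E *ᵥ z = (E.symm (0, z)).2 := by
  simp [cornerSymm]

lemma schurCompl_mulVec (w : Fin n → ℝ) :
    schurCompl E *ᵥ w = (E (1, 0)).1 • (E (0, w)).2 - (E (0, w)).1 • (E (1, 0)).2 := by
  rw [schurCompl, LinearMap.toMatrix'_mulVec]
  simp

lemma cornerSymm_mul_schurCompl : cornerSymm E * schurCompl E = (E (1, 0)).1 • 1 := by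
  refine Matrix.ext_iff_mulVec.mpr fun w => ?_
  have h : ((0 : ℝ), schurCompl E *ᵥ w) = (E (1, 0)).1 • E (0, w) - (E (0, w)).1 • E (1, 0) := by
    ext
    · simp [mul_comm]
    · simp [schurCompl_mulVec]
  rw [← mulVec_mulVec, cornerSymm_mulVec, h]
  simp [smul_mulVec]

lemma schurCompl_mul_cornerSymm : schurCompl E * cornerSymm E = (E (1, 0)).1 • 1 := by
  refine Matrix.ext_iff_mulVec.mpr fun z => ?_
  have h : E (0, cornerSymm E *ᵥ z) = (0, z) - (E.symm (0, z)).1 • E (1, 0) := by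
    rw [← E.apply_symm_apply (0, z), E.symm_apply_apply, ← map_smul, ← map_sub]
    congr 1
    ext <;> simp [cornerSymm_mulVec]
  rw [← mulVec_mulVec, schurCompl_mulVec, h]
  ext i
  simp [smul_mulVec]
  ring

lemma schurCompl_eq_vecMulVec (hα : (E (1, 0)).1 = 0) :
    schurCompl E = vecMulVec (-(E (1, 0)).2) fun j => (E (0, Pi.single j 1)).1 := by
  refine Matrix.ext_of_mulVec_single fun j => ?_
  rw [schurCompl_mulVec, vecMulVec_mulVec, hα]
  ext i
  simp [mul_comm]

lemma snd_symm_gTBracket (T : Matrix (Fin n) (Fin n) ℝ) (w : Fin n → ℝ) :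
    (E.symm (gTBracket T (E (1, 0)) (E (0, w)))).2 = (cornerSymm E * T * schurCompl E) *ᵥ w := by
  rw [← mulVec_mulVec, ← mulVec_mulVec, schurCompl_mulVec, cornerSymm_mulVec, gTBracket,
    mulVec_sub, mulVec_smul, mulVec_smul]

end BlockDecomposition

section Factorization

variable {n : ℕ} {D K T : Matrix (Fin n) (Fin n) ℝ}

lemma mul_mul_mem_doubleCone_diff {a : ℝ} (hT : T ≠ 0) (ha : a ≠ 0) (hDK : D * K = a • 1) :
    D * T * K ∈ doubleCone T \ {0} := by
  have hD : D * (a⁻¹ • K) = 1 := by rw [mul_smul_comm, hDK, smul_smul, inv_mul_cancel₀ ha, one_smul]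
  have hK : K = a • D⁻¹ := by
    rw [Matrix.inv_eq_right_inv hD, smul_smul, mul_inv_cancel₀ ha, one_smul]
  rw [hK, mul_smul_comm]
  exact smul_mem_doubleCone_diff hT (conj_mem_simOrbit (self_mem_simOrbit T)
    (IsUnit.of_mul_eq_one _ hD)) ha

lemma mul_mul_mem_squareZeroRankLeOne (hKD : K * D = 0) {x y : Fin n → ℝ}
    (hK : K = vecMulVec x y) : D * T * K ∈ squareZeroRankLeOne n := by
  constructor
  · rw [show D * T * K * (D * T * K) = D * T * (K * D) * T * K by simp only [mul_assoc], hKD]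
    simp
  · rw [hK, mul_vecMulVec]
    intro i j k l
    simp only [vecMulVec_apply]
    ring

end Factorization

lemma tendsto_cornerSymm_mul_mul_schurCompl {n : ℕ} {T S : Matrix (Fin n) (Fin n) ℝ} {ι : Type*}
    {l : Filter ι} {C : ι → (ℝ × (Fin n → ℝ)) ≃ₗ[ℝ] (ℝ × (Fin n → ℝ))}
    (hC : ∀ x y, Tendsto (fun r => (C r).symm (gTBracket T (C r x) (C r y))) l
      (𝓝 (gTBracket S x y))) :
    Tendsto (fun r => cornerSymm (C r) * T * schurCompl (C r)) l (𝓝 S) := by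
  refine tendsto_pi_nhds.mpr fun i => tendsto_pi_nhds.mpr fun j => ?_
  have h := ((continuous_apply i).comp continuous_snd).tendsto _ |>.comp
    (hC (1, 0) (0, Pi.single j 1))
  simp only [Function.comp_def, snd_symm_gTBracket, mulVec_single_one] at h
  simpa [gTBracket] using h

theorem mem_closure_doubleCone_of_isContractionOf_general {n : ℕ}
    (T S : Matrix (Fin n) (Fin n) ℝ) (hT : T ≠ 0)
    (h : IsContractionOf (gTBracket T) (gTBracket S)) :
    S ∈ closure (doubleCone T \ {0}) := by
  obtain ⟨I, hI, C, hC⟩ := h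
  have hM := tendsto_cornerSymm_mul_mul_schurCompl hC
  by_cases hα : ∃ᶠ r in 𝓝[I \ {0}] 0, (C r (1, 0)).1 ≠ 0
  · exact mem_closure_of_frequently_of_tendsto
      (hα.mono fun r hr => mul_mul_mem_doubleCone_diff hT hr (cornerSymm_mul_schurCompl _)) hM
  have hα0 : ∀ᶠ r in 𝓝[I \ {0}] 0, (C r (1, 0)).1 = 0 := by simpa using hα
  by_cases hTs : ∀ c : ℝ, T ≠ c • 1
  · refine mem_closure_doubleCone_diff_of_mem_squareZeroRankLeOne hTs
      (isClosed_squareZeroRankLeOne.mem_of_tendsto hM (hα0.mono fun r hr => ?_))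
    exact mul_mul_mem_squareZeroRankLeOne (by rw [schurCompl_mul_cornerSymm, hr, zero_smul])
      (schurCompl_eq_vecMulVec _ hr)
  obtain ⟨c, rfl⟩ := not_forall_not.mp hTs
  have hS : S = 0 := tendsto_nhds_unique hM <| tendsto_const_nhds.congr' <| hα0.mono fun r hr => by
    simp [cornerSymm_mul_schurCompl, hr]
  exact hS ▸ zero_mem_closure_doubleCone_diff hT

/-- If `T, S ≠ 0` and `g_T ⇝ g_S`, then `S` lies in the closure of `C(T) \ {0}`
in the space of `n × n` real matrices. -/
theorem mem_closure_doubleCone_of_isContractionOf {n : ℕ}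
    (T S : Matrix (Fin n) (Fin n) ℝ) (hT : T ≠ 0) (hS : S ≠ 0)
    (h : IsContractionOf (gTBracket T) (gTBracket S)) :
    S ∈ closure (doubleCone T \ {0}) :=
  mem_closure_doubleCone_of_isContractionOf_general T S hT h
end

section
/- Let T, T₀ : ℝⁿ → ℝⁿ be linear maps. If T₀ lies in the closure of the similarity orbit S(T) = {A T A⁻¹ : A ∈ GL(n,ℝ)} in M_n(ℝ), then g_T ⇝ g_{T₀}. -/
open Filter Topology

/-!
Conjugating the `ℝⁿ`-factor by `A ∈ GL(n, ℝ)` is an isomorphism `g_T ≅ g_{A T A⁻¹}`, and the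
bracket of `g_S` depends continuously on `S`. Hence if `A_k T A_k⁻¹ → T₀`, the brackets of `g_T`
transported by these isomorphisms converge to the bracket of `g_{T₀}`; reparametrising by
`k = ⌊1/r⌋` for `r > 0` turns this sequence into a contraction.
-/

theorem IsContractionOf.of_tendsto_atTop {V W : Type*} [AddCommGroup V] [Module ℝ V]
    [AddCommGroup W] [Module ℝ W] [TopologicalSpace W]
    {bg : V → V → V} {bg₀ : W → W → W} (C : ℕ → W ≃ₗ[ℝ] V)
    (hC : ∀ x y, Tendsto (fun k => (C k).symm (bg (C k x) (C k y))) atTop (𝓝 (bg₀ x y))) :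
    IsContractionOf bg bg₀ := by
  have hI : Set.Ioi (0 : ℝ) \ {0} = Set.Ioi 0 := Set.sdiff_singleton_eq_self Set.self_notMem_Ioi
  have hfloor : Tendsto (fun r : ℝ => ⌊r⁻¹⌋₊) (𝓝[Set.Ioi 0 \ {0}] 0) atTop := by
    rw [hI]; exact tendsto_nat_floor_atTop.comp tendsto_inv_nhdsGT_zero
  refine ⟨Set.Ioi 0, by rw [hI]; infer_instance, fun r => C ⌊r⁻¹⌋₊, fun x y => ?_⟩
  exact (hC x y).comp hfloor

section Semidirect

variable {n : ℕ}

noncomputable def gTEquiv (A : Matrix (Fin n) (Fin n) ℝ) [Invertible A] :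
    (ℝ × (Fin n → ℝ)) ≃ₗ[ℝ] (ℝ × (Fin n → ℝ)) :=
  (LinearEquiv.refl ℝ ℝ).prodCongr (A.toLinearEquiv' ‹_›)

theorem gTEquiv_apply (A : Matrix (Fin n) (Fin n) ℝ) [Invertible A] (x : ℝ × (Fin n → ℝ)) :
    gTEquiv A x = (x.1, A.mulVec x.2) :=
  rfl

theorem gTEquiv_gTBracket (T A : Matrix (Fin n) (Fin n) ℝ) [Invertible A]
    (x y : ℝ × (Fin n → ℝ)) :
    gTEquiv A (gTBracket T x y) = gTBracket (A * T * A⁻¹) (gTEquiv A x) (gTEquiv A y) := by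
  simp [gTEquiv_apply, gTBracket, Matrix.mulVec_sub, Matrix.mulVec_smul, Matrix.mulVec_mulVec,
    Matrix.mul_assoc]

theorem continuous_gTBracket_apply (x y : ℝ × (Fin n → ℝ)) :
    Continuous fun T : Matrix (Fin n) (Fin n) ℝ => gTBracket T x y := by
  unfold gTBracket; fun_prop

end Semidirect

/-- If `T₀` lies in the closure of the similarity orbit `S(T)` in `M_n(ℝ)`,
then `g_T ⇝ g_{T₀}`. -/
theorem isContractionOf_of_mem_closure_simOrbit {n : ℕ}
    (T T₀ : Matrix (Fin n) (Fin n) ℝ) (h : T₀ ∈ closure (simOrbit T)) :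
    IsContractionOf (gTBracket T) (gTBracket T₀) := by
  -- `Matrix` has no `FrechetUrysohnSpace` instance; use that of the underlying product space.
  obtain ⟨S, hS, hST₀⟩ := (mem_closure_iff_seq_limit (X := Fin n → Fin n → ℝ)).mp h
  choose A hA hSA using hS
  have := fun k => (hA k).invertible
  refine IsContractionOf.of_tendsto_atTop (fun k => (gTEquiv (A k)).symm) fun x y => ?_
  have hconj : ∀ k, (gTEquiv (A k)).symm.symm (gTBracket T ((gTEquiv (A k)).symm x)
      ((gTEquiv (A k)).symm y)) = gTBracket (S k) x y := fun k => by
    rw [LinearEquiv.symm_symm, gTEquiv_gTBracket, LinearEquiv.apply_symm_apply,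
      LinearEquiv.apply_symm_apply, hSA]
  simp only [hconj]
  exact ((continuous_gTBracket_apply x y).tendsto T₀).comp hST₀
end

section
/- Let T, T₀ : ℝⁿ → ℝⁿ be linear maps and m ≥ 1 an integer. If T^m = 0 and g_T ⇝ g_{T₀}, then T₀^m = 0. -/
open Filter Topology

/-! In `g_T` the map `ad u` sends everything into the abelian ideal `ℝⁿ` and acts there as
`u.1 • T`, so `ad u ^ m = 0` for every `u` once `T ^ m = 0` with `m ≥ 1`; in `g_{T₀}`,
`ad (1, 0)` acts on `ℝⁿ` as `T₀`. Along a contraction, `ad x` in the limit algebra is the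
pointwise limit of the conjugates `C_r⁻¹ ∘ ad (C_r x) ∘ C_r`, all killed by the `m`-th power.
In finite dimension pointwise convergence of linear maps is jointly continuous in the argument
(expand in a basis), so powers pass to the limit and `ad (1, 0) ^ m = 0` in `g_{T₀}`, i.e.
`T₀ ^ m = 0`. -/

section PointwiseConvergence

variable {α 𝕜 E F : Type*} [NontriviallyNormedField 𝕜] [CompleteSpace 𝕜]
  [AddCommGroup E] [Module 𝕜 E] [TopologicalSpace E] [IsTopologicalAddGroup E]
  [ContinuousSMul 𝕜 E] [T2Space E] [FiniteDimensional 𝕜 E]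
  [AddCommGroup F] [Module 𝕜 F] [TopologicalSpace F] [ContinuousAdd F] [ContinuousSMul 𝕜 F]
  {l : Filter α}

theorem tendsto_apply_of_tendsto_apply {L : α → E →ₗ[𝕜] F} {A : E →ₗ[𝕜] F}
    (hL : ∀ x, Tendsto (fun a => L a x) l (𝓝 (A x)))
    {z : α → E} {z₀ : E} (hz : Tendsto z l (𝓝 z₀)) :
    Tendsto (fun a => L a (z a)) l (𝓝 (A z₀)) := by
  set b := Module.finBasis 𝕜 E
  have expand : ∀ (M : E →ₗ[𝕜] F) (x : E), M x = ∑ i, b.coord i x • M (b i) := fun M x => by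
    conv_lhs => rw [← b.sum_repr x]
    simp only [map_sum, map_smul, Module.Basis.coord_apply]
  have hcoord : ∀ i, Tendsto (fun a => b.coord i (z a)) l (𝓝 (b.coord i z₀)) := fun i =>
    ((b.coord i).continuous_of_finiteDimensional.tendsto z₀).comp hz
  rw [expand A]
  exact (tendsto_finsetSum _ fun i _ => (hcoord i).smul (hL (b i))).congr fun a =>
    (expand _ _).symm

variable {L : α → Module.End 𝕜 E} {A : Module.End 𝕜 E}

theorem tendsto_pow_apply_of_tendsto_apply (hL : ∀ x, Tendsto (fun a => L a x) l (𝓝 (A x)))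
    (k : ℕ) (x : E) : Tendsto (fun a => (L a ^ k) x) l (𝓝 ((A ^ k) x)) := by
  induction k with
  | zero => simpa using tendsto_const_nhds
  | succ k ih =>
    simp only [pow_succ', Module.End.mul_apply]
    exact tendsto_apply_of_tendsto_apply hL ih

theorem pow_eq_zero_of_tendsto_apply [l.NeBot]
    (hL : ∀ x, Tendsto (fun a => L a x) l (𝓝 (A x))) {m : ℕ} (hLm : ∀ a, L a ^ m = 0) :
    A ^ m = 0 := by
  ext x
  refine tendsto_nhds_unique (tendsto_pow_apply_of_tendsto_apply hL m x) ?_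
  simp [hLm]

end PointwiseConvergence

theorem IsContractionOf.pow_eq_zero {V W : Type*} [AddCommGroup V] [Module ℝ V]
    [AddCommGroup W] [Module ℝ W] [TopologicalSpace W] [IsTopologicalAddGroup W]
    [ContinuousSMul ℝ W] [T2Space W] [FiniteDimensional ℝ W]
    {B : V →ₗ[ℝ] V →ₗ[ℝ] V} {B₀ : W →ₗ[ℝ] W →ₗ[ℝ] W}
    (h : IsContractionOf (fun x y => B x y) (fun x y => B₀ x y))
    {m : ℕ} (hB : ∀ u, B u ^ m = 0) (x : W) : B₀ x ^ m = 0 := by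
  obtain ⟨I, hI, C, hC⟩ := h
  exact pow_eq_zero_of_tendsto_apply (L := fun r => (C r).symm.conjRingEquiv (B (C r x)))
    (hC x) fun r => by rw [← map_pow, hB, map_zero]

section SemidirectProduct

open Matrix

variable {n : ℕ} (T : Matrix (Fin n) (Fin n) ℝ)

noncomputable def gTBracketₗ :
    (ℝ × (Fin n → ℝ)) →ₗ[ℝ] (ℝ × (Fin n → ℝ)) →ₗ[ℝ] (ℝ × (Fin n → ℝ)) :=
  LinearMap.mk₂ ℝ (gTBracket T)
    (fun _ _ _ => by ext <;> simp [gTBracket, add_smul, mulVec_add]; abel)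
    (fun _ _ _ => by ext <;> simp [gTBracket, smul_sub, smul_smul, mulVec_smul, mul_comm])
    (fun _ _ _ => by ext <;> simp [gTBracket, add_smul, mulVec_add]; abel)
    (fun _ _ _ => by ext <;> simp [gTBracket, smul_sub, smul_smul, mulVec_smul, mul_comm])

theorem gTBracketₗ_apply (u v : ℝ × (Fin n → ℝ)) :
    gTBracketₗ T u v = (0, T *ᵥ (u.1 • v.2 - v.1 • u.2)) := by
  simp [gTBracketₗ, gTBracket, mulVec_sub, mulVec_smul]

theorem gTBracketₗ_pow_apply_zero_mk (u : ℝ × (Fin n → ℝ)) (k : ℕ) (w : Fin n → ℝ) :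
    (gTBracketₗ T u ^ k) (0, w) = (0, u.1 ^ k • (T ^ k) *ᵥ w) := by
  induction k with
  | zero => simp
  | succ k ih =>
    rw [pow_succ', Module.End.mul_apply, ih, gTBracketₗ_apply]
    simp [pow_succ', mulVec_mulVec, mulVec_smul, smul_smul]

theorem gTBracketₗ_pow_eq_zero {m : ℕ} (hm : 0 < m) (hT : T ^ m = 0) (u : ℝ × (Fin n → ℝ)) :
    gTBracketₗ T u ^ m = 0 := by
  obtain ⟨k, rfl⟩ := Nat.exists_eq_add_one_of_ne_zero hm.ne'
  refine LinearMap.ext fun z => ?_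
  rw [pow_succ, Module.End.mul_apply, gTBracketₗ_apply, gTBracketₗ_pow_apply_zero_mk,
    mulVec_mulVec, ← pow_succ, hT]
  simp

end SemidirectProduct

/-- If `T^m = 0` (`m ≥ 1`) and `g_T ⇝ g_{T₀}`, then `T₀^m = 0`. -/
theorem pow_eq_zero_of_isContractionOf {n : ℕ}
    (T T₀ : Matrix (Fin n) (Fin n) ℝ) (m : ℕ) (hm : 1 ≤ m) (hT : T ^ m = 0)
    (h : IsContractionOf (gTBracket T) (gTBracket T₀)) :
    T₀ ^ m = 0 := by
  have hT₀ : gTBracketₗ T₀ (1, 0) ^ m = 0 :=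
    IsContractionOf.pow_eq_zero h (gTBracketₗ_pow_eq_zero T hm hT) (1, 0)
  refine Matrix.ext_iff_mulVec.2 fun w => ?_
  simpa [gTBracketₗ_pow_apply_zero_mk] using congr_arg Prod.snd (LinearMap.congr_fun hT₀ (0, w))
end

section
/- Let T : ℝⁿ → ℝⁿ be a linear map with T^n = 0 and T^{n−1} ≠ 0 (i.e., T is a single nilpotent Jordan cell of size n). Then for every nilpotent linear map T₀ : ℝⁿ → ℝⁿ one has g_T ⇝ g_{T₀}. -/
open Filter Topology Matrix Finset



open Filter Topology

section Helpers


variable {n : ℕ}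

def StrictUpper (A : Matrix (Fin n) (Fin n) ℝ) : Prop := ∀ i j : Fin n, (j:ℕ) ≤ i → A i j = 0

lemma su_pow (A : Matrix (Fin n) (Fin n) ℝ) (h : StrictUpper A) :
    ∀ k, ∀ i j : Fin n, (j:ℕ) < (i:ℕ) + k → (A ^ k) i j = 0 := by
  intro k
  induction k with
  | zero =>
    intro i j hij
    simp only [pow_zero, Matrix.one_apply]
    rw [if_neg]
    rintro rfl; omega
  | succ k ih =>
    intro i j hij
    rw [pow_succ', Matrix.mul_apply]
    refine Finset.sum_eq_zero fun l _ => ?_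
    rcases le_or_gt (l:ℕ) (i:ℕ) with hl | hl
    · rw [h i l hl, zero_mul]
    · rw [ih l j (by omega), mul_zero]

lemma su_pow_n (A : Matrix (Fin n) (Fin n) ℝ) (h : StrictUpper A) : A ^ n = 0 := by
  ext i j
  rw [su_pow A h n i j (by omega)]; rfl

lemma su_pow_ne (A : Matrix (Fin n) (Fin n) ℝ) (h : StrictUpper A)
    (hd : ∀ i j : Fin n, (i:ℕ) + 1 = j → A i j ≠ 0) :
    ∀ k, ∀ i j : Fin n, (i:ℕ) + k = j → (A ^ k) i j ≠ 0 := by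
  intro k
  induction k with
  | zero =>
    intro i j hij
    have : i = j := Fin.ext (by omega)
    subst this
    simp [pow_zero, Matrix.one_apply]
  | succ k ih =>
    intro i j hij
    have hi1 : (i:ℕ) + 1 < n := by omega
    rw [pow_succ', Matrix.mul_apply]
    rw [Finset.sum_eq_single (⟨(i:ℕ)+1, hi1⟩ : Fin n)]
    · refine mul_ne_zero (hd i _ rfl) (ih _ j ?_)
      show (i:ℕ) + 1 + k = j
      omega
    · intro l _ hl
      rcases le_or_gt (l:ℕ) (i:ℕ) with h2 | h2
      · rw [h i l h2, zero_mul]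
      · have h3 : (i:ℕ) + 1 < l := by
          rcases Nat.lt_or_ge ((i:ℕ)+1) (l:ℕ) with h3 | h3
          · exact h3
          · exfalso; exact hl (Fin.ext (by simp; omega))
        rw [su_pow A h k l j (by omega), mul_zero]
    · intro hmem; exact absurd (Finset.mem_univ _) hmem


def Jstd (n : ℕ) : Matrix (Fin n) (Fin n) ℝ := Matrix.of fun i j => if (i:ℕ) + 1 = (j:ℕ) then 1 else 0

lemma cyc (M : Matrix (Fin n) (Fin n) ℝ) (h1 : M ^ n = 0) (h2 : M ^ (n-1) ≠ 0) :
    ∃ u : (Matrix (Fin n) (Fin n) ℝ)ˣ, M * (u : Matrix (Fin n) (Fin n) ℝ) = (u : Matrix (Fin n) (Fin n) ℝ) * Jstd n := by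
  obtain ⟨i₀, j₀, hij⟩ : ∃ i j, (M ^ (n-1)) i j ≠ 0 := by
    by_contra hc
    push_neg at hc
    exact h2 (by ext i j; rw [hc i j]; rfl)
  set v : Fin n → ℝ := Pi.single j₀ 1 with hv
  have hvne : (M ^ (n-1)).mulVec v ≠ 0 := by
    intro h0
    apply hij
    have := congrFun h0 i₀
    simpa [hv, Matrix.mulVec_single] using this
  set P : Matrix (Fin n) (Fin n) ℝ := Matrix.of fun i j => ((M ^ (n - 1 - (j:ℕ))).mulVec v) i with hP
  have hMP : M * P = P * Jstd n := by
    ext i j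
    rw [Matrix.mul_apply, Matrix.mul_apply]
    have lhs : ∑ k, M i k * P k j = (M.mulVec ((M ^ (n - 1 - (j:ℕ))).mulVec v)) i := rfl
    rw [lhs, Matrix.mulVec_mulVec, ← pow_succ']
    rcases Nat.eq_zero_or_pos (j:ℕ) with hj0 | hjpos
    · have hnn : n - 1 - (j:ℕ) + 1 = n := by omega
      rw [hnn, h1]
      have : ∀ k : Fin n, P i k * Jstd n k j = 0 := by
        intro k
        have : Jstd n k j = 0 := by
          simp only [Jstd, Matrix.of_apply]
          rw [if_neg]; omega
        rw [this, mul_zero]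
      rw [Finset.sum_eq_zero fun k _ => this k]
      simp
    · have hj1 : (j:ℕ) - 1 < n := by omega
      rw [Finset.sum_eq_single (⟨(j:ℕ)-1, hj1⟩ : Fin n)]
      · have hJ : Jstd n ⟨(j:ℕ)-1, hj1⟩ j = 1 := by
          simp only [Jstd, Matrix.of_apply]
          rw [if_pos]; omega
        rw [hJ, mul_one]
        have hee : n - 1 - (((⟨(j:ℕ)-1, hj1⟩ : Fin n)):ℕ) = n - 1 - (j:ℕ) + 1 := by simp; omega
        simp only [hP, Matrix.of_apply]
        rw [hee]
      · intro k _ hk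
        have : Jstd n k j = 0 := by
          simp only [Jstd, Matrix.of_apply]
          rw [if_neg]
          intro hc
          exact hk (Fin.ext (by simp; omega))
        rw [this, mul_zero]
      · intro hmem; exact absurd (Finset.mem_univ _) hmem
  have hinj : ∀ a : Fin n → ℝ, P.mulVec a = 0 → a = 0 := by
    intro a ha
    have hsum : ∀ i : Fin n, P.mulVec a = ∑ j : Fin n, a j • (M ^ (n - 1 - (j:ℕ))).mulVec v := by
      intro _
      funext i
      rw [Matrix.mulVec, dotProduct, Finset.sum_apply]
      refine Finset.sum_congr rfl fun j _ => ?_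
      simp [hP, mul_comm]
    have key : ∀ m : ℕ, ∀ k : Fin n, n = (k:ℕ) + m + 1 → a k = 0 := by
      intro m
      induction m using Nat.strong_induction_on with
      | _ m ih =>
        intro k hk
        have h0 : (M ^ (k:ℕ)).mulVecLin (∑ j : Fin n, a j • (M ^ (n - 1 - (j:ℕ))).mulVec v) = 0 := by
          rw [← hsum k, Matrix.mulVecLin_apply, ha, Matrix.mulVec_zero]
        rw [map_sum] at h0
        simp only [LinearMap.map_smul, Matrix.mulVecLin_apply, Matrix.mulVec_mulVec, ← pow_add] at h0
        rw [Finset.sum_eq_single k] at h0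
        · have hee : (k:ℕ) + (n - 1 - (k:ℕ)) = n - 1 := by omega
          rw [hee] at h0
          rcases smul_eq_zero.1 h0 with h | h
          · exact h
          · exact absurd h hvne
        · intro j _ hj
          rcases Nat.lt_or_ge (j:ℕ) (k:ℕ) with hlt | hge
          · have : M ^ ((k:ℕ) + (n - 1 - (j:ℕ))) = 0 :=
              pow_eq_zero_of_le (by omega) h1
            rw [this, Matrix.zero_mulVec, smul_zero]
          · have hgt : (k:ℕ) < (j:ℕ) := by
              rcases Nat.lt_or_ge (k:ℕ) (j:ℕ) with h' | h'
              · exact h'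
              · exact absurd (Fin.ext (by omega) : j = k) hj
            rw [ih (n - 1 - (j:ℕ)) (by omega) j (by omega), zero_smul]
        · intro hmem; exact absurd (Finset.mem_univ _) hmem
    funext k
    have : a k = 0 := key (n - 1 - (k:ℕ)) k (by omega)
    simpa using this
  have hdet : P.det ≠ 0 := by
    intro hd
    obtain ⟨a, hane, ha0⟩ := (Matrix.exists_mulVec_eq_zero_iff).2 hd
    exact hane (hinj a ha0)
  have hu : IsUnit P := by rw [Matrix.isUnit_iff_isUnit_det]; exact hdet.isUnit
  obtain ⟨u, hu⟩ := hu
  exact ⟨u, by rw [hu]; exact hMP⟩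


/-- embed an n×n matrix as lower-right block with 1 in corner -/
def emb {n : ℕ} (A : Matrix (Fin n) (Fin n) ℝ) : Matrix (Fin (n+1)) (Fin (n+1)) ℝ :=
  Matrix.of fun i j =>
    Fin.cases (Fin.cases (1:ℝ) (fun _ => 0) j) (fun i' => Fin.cases 0 (fun j' => A i' j') j) i

@[simp] lemma emb_00 {n : ℕ} (A : Matrix (Fin n) (Fin n) ℝ) : emb A 0 0 = 1 := rfl
@[simp] lemma emb_0s {n : ℕ} (A : Matrix (Fin n) (Fin n) ℝ) (j : Fin n) : emb A 0 j.succ = 0 := by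
  simp [emb]
@[simp] lemma emb_s0 {n : ℕ} (A : Matrix (Fin n) (Fin n) ℝ) (i : Fin n) : emb A i.succ 0 = 0 := by
  simp [emb]
@[simp] lemma emb_ss {n : ℕ} (A : Matrix (Fin n) (Fin n) ℝ) (i j : Fin n) : emb A i.succ j.succ = A i j := by
  simp [emb]

lemma emb_mul {n : ℕ} (A B : Matrix (Fin n) (Fin n) ℝ) : emb A * emb B = emb (A * B) := by
  ext i j
  rw [Matrix.mul_apply, Fin.sum_univ_succ]
  refine Fin.cases ?_ (fun i' => ?_) i <;> refine Fin.cases ?_ (fun j' => ?_) j <;>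
    simp [Matrix.mul_apply]

lemma emb_one {n : ℕ} : emb (1 : Matrix (Fin n) (Fin n) ℝ) = 1 := by
  ext i j
  refine Fin.cases ?_ (fun i' => ?_) i <;> refine Fin.cases ?_ (fun j' => ?_) j <;>
    simp [Matrix.one_apply, Fin.succ_ne_zero, (Fin.succ_ne_zero _).symm, Fin.succ_inj]

lemma emb_isUnit {n : ℕ} {A : Matrix (Fin n) (Fin n) ℝ} (h : IsUnit A) : IsUnit (emb A) := by
  obtain ⟨u, rfl⟩ := h
  exact ⟨⟨emb u, emb ↑u⁻¹, by rw [emb_mul, Units.mul_inv, emb_one], by rw [emb_mul, Units.inv_mul, emb_one]⟩, rfl⟩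

lemma conjpow {R : Type*} [Ring R] (U V M : R) (hVU : V * U = 1) (hUV : U * V = 1) (k : ℕ) :
    (V * M * U) ^ k = V * M ^ k * U := by
  induction k with
  | zero => rw [pow_zero, pow_zero, mul_one, hVU]
  | succ k ih =>
    rw [pow_succ, ih, pow_succ]
    calc (V * M ^ k * U) * (V * M * U) = V * M ^ k * (U * V) * (M * U) := by noncomm_ring
      _ = V * (M ^ k * M) * U := by rw [hUV]; noncomm_ring

lemma tri : ∀ (n : ℕ) (M : Matrix (Fin n) (Fin n) ℝ), IsNilpotent M →
    ∃ (Q N : Matrix (Fin n) (Fin n) ℝ), IsUnit Q ∧ StrictUpper N ∧ M * Q = Q * N := by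
  intro n
  induction n with
  | zero =>
    intro M _
    exact ⟨1, M, isUnit_one, fun i => i.elim0, by rw [one_mul, mul_one]⟩
  | succ n ih =>
    intro M hM
    obtain ⟨k, hk⟩ := hM
    have hdet : M.det = 0 := by
      rcases Nat.eq_zero_or_pos k with rfl | hkpos
      · exfalso
        have := congrFun (congrFun hk 0) 0
        simp [Matrix.one_apply] at this
      · have h' : M.det ^ k = 0 := by
          rw [← Matrix.det_pow, hk]
          simp
        exact pow_eq_zero_iff hkpos.ne' |>.mp h'
    obtain ⟨v, hvne, hv0⟩ := (Matrix.exists_mulVec_eq_zero_iff).2 hdet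
    -- index where v is nonzero
    obtain ⟨i₀, hi₀⟩ : ∃ i, v i ≠ 0 := by
      by_contra hc
      push_neg at hc
      exact hvne (funext hc)
    -- Q₁ : columns v, e_{succAbove i₀ j}
    set Q₁ : Matrix (Fin (n+1)) (Fin (n+1)) ℝ :=
      Matrix.of fun i j =>
        Fin.cases (v i) (fun j' => if i = i₀.succAbove j' then 1 else 0) j with hQ₁
    have hQ₁inj : ∀ a : Fin (n+1) → ℝ, Q₁.mulVec a = 0 → a = 0 := by
      intro a ha
      have hrow : ∀ i, v i * a 0 + ∑ j' : Fin n, (if i = i₀.succAbove j' then 1 else 0) * a j'.succ = 0 := by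
        intro i
        have := congrFun ha i
        rw [Matrix.mulVec, dotProduct, Fin.sum_univ_succ] at this
        simpa [hQ₁] using this
      have ha0 : a 0 = 0 := by
        have h := hrow i₀
        rw [Finset.sum_eq_zero (fun j' _ => by
          rw [if_neg (Fin.succAbove_ne i₀ j').symm, zero_mul]), add_zero] at h
        rcases mul_eq_zero.1 h with h' | h'
        · exact absurd h' hi₀
        · exact h'
      have has : ∀ j' : Fin n, a j'.succ = 0 := by
        intro j'
        have h := hrow (i₀.succAbove j')
        rw [Finset.sum_eq_single j'] at h
        · rw [if_pos rfl, one_mul, ha0, mul_zero, zero_add] at h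
          exact h
        · intro l _ hl
          rw [if_neg fun hc => hl (Fin.succAbove_right_injective hc.symm), zero_mul]
        · intro hmem; exact absurd (Finset.mem_univ _) hmem
      funext i
      refine Fin.cases ?_ (fun i' => ?_) i
      · exact ha0
      · exact has i'
    have hQ₁unit : IsUnit Q₁ := by
      rw [Matrix.isUnit_iff_isUnit_det]
      refine (isUnit_iff_ne_zero).2 fun hd => ?_
      obtain ⟨a, hane, ha0⟩ := (Matrix.exists_mulVec_eq_zero_iff).2 hd
      exact hane (hQ₁inj a ha0)
    obtain ⟨q₁, hq₁⟩ := hQ₁unit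
    set V : Matrix (Fin (n+1)) (Fin (n+1)) ℝ := ↑q₁⁻¹ with hV
    have hVU : V * Q₁ = 1 := by rw [hV, ← hq₁]; exact q₁.inv_mul
    have hUV : Q₁ * V = 1 := by rw [hV, ← hq₁]; exact q₁.mul_inv
    set M' : Matrix (Fin (n+1)) (Fin (n+1)) ℝ := V * M * Q₁ with hM'
    have hcol : ∀ i, M' i 0 = 0 := by
      have hQv : Q₁.mulVec (Pi.single 0 1) = v := by
        funext i
        rw [Matrix.mulVec_single]
        simp [hQ₁]
      have : M'.mulVec (Pi.single 0 1) = 0 := by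
        rw [hM', ← Matrix.mulVec_mulVec, ← Matrix.mulVec_mulVec, hQv, hv0, Matrix.mulVec_zero]
      intro i
      have := congrFun this i
      rw [Matrix.mulVec_single] at this
      simpa using this
    have hM'k : M' ^ k = 0 := by
      rw [hM', conjpow Q₁ V M hVU hUV, hk]
      simp
    set B : Matrix (Fin n) (Fin n) ℝ := Matrix.of fun i j => M' i.succ j.succ with hB
    have hsub : ∀ m : ℕ, ∀ i j : Fin n, (M' ^ m) i.succ j.succ = (B ^ m) i j := by
      intro m
      induction m with
      | zero =>
        intro i j
        simp [Matrix.one_apply, Fin.succ_inj]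
      | succ m ihm =>
        intro i j
        rw [pow_succ', pow_succ', Matrix.mul_apply, Matrix.mul_apply, Fin.sum_univ_succ]
        rw [hcol _, zero_mul, zero_add]
        exact Finset.sum_congr rfl fun l _ => by rw [ihm l j]; rfl
    have hBnil : IsNilpotent B := by
      refine ⟨k, ?_⟩
      ext i j
      rw [← hsub k i j, hM'k]
      rfl
    obtain ⟨Q', N', hQ'unit, hN'su, hQ'N'⟩ := ih B hBnil
    obtain ⟨q', hq'⟩ := hQ'unit
    -- assemble
    set r : Fin n → ℝ := fun j => ∑ l : Fin n, M' 0 l.succ * Q' l j with hr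
    set N : Matrix (Fin (n+1)) (Fin (n+1)) ℝ :=
      Matrix.of fun i j =>
        Fin.cases (Fin.cases (0:ℝ) (fun j' => r j') j) (fun i' => Fin.cases 0 (fun j' => N' i' j') j) i with hN
    set Q₂ : Matrix (Fin (n+1)) (Fin (n+1)) ℝ := emb Q' with hQ₂
    have hQ₂unit : IsUnit Q₂ := emb_isUnit ⟨q', hq'⟩
    have hstep : M' * Q₂ = Q₂ * N := by
      ext i j
      rw [Matrix.mul_apply, Matrix.mul_apply, Fin.sum_univ_succ, Fin.sum_univ_succ]
      refine Fin.cases ?_ (fun i' => ?_) i <;> refine Fin.cases ?_ (fun j' => ?_) j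
      · -- (0,0)
        simp [hQ₂, hN, hcol 0]
      · -- (0, succ j')
        simp only [hQ₂, emb_00, emb_0s, emb_s0, emb_ss, hN, Matrix.of_apply, Fin.cases_zero, Fin.cases_succ]
        rw [hcol 0]
        simp [hr]
      · -- (succ i', 0)
        simp only [hQ₂, emb_00, emb_0s, emb_s0, emb_ss, hN, Matrix.of_apply, Fin.cases_zero, Fin.cases_succ]
        rw [hcol i'.succ]
        simp
      · -- (succ i', succ j')
        simp only [hQ₂, emb_00, emb_0s, emb_s0, emb_ss, hN, Matrix.of_apply, Fin.cases_zero, Fin.cases_succ]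
        rw [hcol i'.succ]
        simp only [zero_mul, mul_zero, zero_add, mul_one]
        have h1 : ∑ l : Fin n, M' i'.succ l.succ * Q' l j' = (B * Q') i' j' := by
          rw [Matrix.mul_apply]; rfl
        have h2 : ∑ l : Fin n, Q' i' l * N' l j' = (Q' * N') i' j' := by
          rw [Matrix.mul_apply]
        rw [h1, h2, hQ'N']
    have hNsu : StrictUpper N := by
      intro i j
      refine Fin.cases ?_ (fun i' => ?_) i <;> refine Fin.cases ?_ (fun j' => ?_) j <;> intro hij
      · simp [hN]
      · exact absurd hij (by simp)
      · simp [hN]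
      · have : (j' : ℕ) ≤ (i' : ℕ) := by
          have h1 : ((j'.succ : Fin (n+1)) : ℕ) = (j' : ℕ) + 1 := Fin.val_succ j'
          have h2 : ((i'.succ : Fin (n+1)) : ℕ) = (i' : ℕ) + 1 := Fin.val_succ i'
          omega
        have := hN'su i' j' this
        simp [hN, this]
    refine ⟨Q₁ * Q₂, N, ((hq₁ ▸ q₁.isUnit : IsUnit Q₁)).mul hQ₂unit, hNsu, ?_⟩
    have hMQ₁ : M * Q₁ = Q₁ * M' := by
      rw [hM']
      calc M * Q₁ = (Q₁ * V) * (M * Q₁) := by rw [hUV, one_mul]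
        _ = Q₁ * (V * M * Q₁) := by noncomm_ring
    rw [← mul_assoc, hMQ₁, mul_assoc, hstep, mul_assoc]

/-- linear equiv on ℝ × ℝⁿ given by identity × mulVec by a unit matrix -/
noncomputable def cmap {n : ℕ} (u : (Matrix (Fin n) (Fin n) ℝ)ˣ) :
    (ℝ × (Fin n → ℝ)) ≃ₗ[ℝ] (ℝ × (Fin n → ℝ)) where
  toFun p := (p.1, (↑u : Matrix (Fin n) (Fin n) ℝ).mulVec p.2)
  invFun p := (p.1, (↑u⁻¹ : Matrix (Fin n) (Fin n) ℝ).mulVec p.2)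
  map_add' p q := by
    ext <;> simp [Matrix.mulVec_add]
  map_smul' c p := by
    ext <;> simp [Matrix.mulVec_smul]
  left_inv p := by
    ext <;> simp only [Matrix.mulVec_mulVec, Units.inv_mul, Matrix.one_mulVec]
  right_inv p := by
    ext <;> simp only [Matrix.mulVec_mulVec, Units.mul_inv, Matrix.one_mulVec]

@[simp] lemma cmap_apply {n : ℕ} (u : (Matrix (Fin n) (Fin n) ℝ)ˣ) (p : ℝ × (Fin n → ℝ)) :
    cmap u p = (p.1, (↑u : Matrix (Fin n) (Fin n) ℝ).mulVec p.2) := rfl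

@[simp] lemma cmap_symm_apply {n : ℕ} (u : (Matrix (Fin n) (Fin n) ℝ)ˣ) (p : ℝ × (Fin n → ℝ)) :
    (cmap u).symm p = (p.1, (↑u⁻¹ : Matrix (Fin n) (Fin n) ℝ).mulVec p.2) := rfl

end Helpers
/-- If `T` is a single nilpotent Jordan cell of size `n` (`T^n = 0`, `T^{n-1} ≠ 0`),
then `g_T ⇝ g_{T₀}` for every nilpotent `T₀`. -/
theorem isContractionOf_of_jordan_cell {n : ℕ}
    (T T₀ : Matrix (Fin n) (Fin n) ℝ) (hTn : T ^ n = 0) (hTn' : T ^ (n - 1) ≠ 0)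
    (hT₀ : IsNilpotent T₀) :
    IsContractionOf (gTBracket T) (gTBracket T₀) := by
  rcases Nat.eq_zero_or_pos n with rfl | hn
  · exact absurd (by ext i j; exact i.elim0) hTn'
  obtain ⟨Q, N, hQu, hNsu, hT₀Q⟩ := tri n T₀ hT₀
  obtain ⟨q, hq⟩ := hQu
  set V : Matrix (Fin n) (Fin n) ℝ := ↑q⁻¹ with hV
  have hQV : Q * V = 1 := by rw [hV, ← hq]; exact q.mul_inv
  have hVQ : V * Q = 1 := by rw [hV, ← hq]; exact q.inv_mul
  have hT₀eq : T₀ = Q * N * V := by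
    have : Q * N * V = T₀ := by
      rw [← hT₀Q, mul_assoc, hQV, mul_one]
    exact this.symm
  set I : Set ℝ := {r | ∀ i j : Fin n, (i:ℕ) + 1 = (j:ℕ) → N i j + r ≠ 0} with hI
  have hne : (𝓝[I \ {0}] (0:ℝ)).NeBot := by
    rw [← mem_closure_iff_nhdsWithin_neBot, Metric.mem_closure_iff]
    intro ε hε
    have hIoo : (Set.Ioo (0:ℝ) ε).Infinite := Set.Ioo_infinite hε
    have hfin : (Set.range (fun p : Fin n × Fin n => -N p.1 p.2)).Finite := Set.finite_range _
    obtain ⟨r, hr⟩ := (hIoo.diff hfin).nonempty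
    refine ⟨r, ⟨?_, ?_⟩, ?_⟩
    · intro i j hij hc
      exact hr.2 ⟨(i, j), by simp only; linarith [hc]⟩
    · simp only [Set.mem_singleton_iff]
      exact ne_of_gt hr.1.1
    · rw [Real.dist_eq, abs_sub_comm, sub_zero, abs_of_pos hr.1.1]
      exact hr.1.2
  have hEx : ∀ r, r ∈ I \ {0} → ∃ w : (Matrix (Fin n) (Fin n) ℝ)ˣ,
      T * (↑w : Matrix (Fin n) (Fin n) ℝ)
        = (↑w : Matrix (Fin n) (Fin n) ℝ) * (Q * (N + r • Jstd n) * V) := by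
    intro r hr
    set Nr := N + r • Jstd n with hNr
    have hNrsu : StrictUpper Nr := by
      intro i j hij
      simp only [hNr, Matrix.add_apply, Matrix.smul_apply, Jstd, Matrix.of_apply]
      rw [hNsu i j hij, if_neg (by omega)]
      simp
    have hNrd : ∀ i j : Fin n, (i:ℕ) + 1 = (j:ℕ) → Nr i j ≠ 0 := by
      intro i j hij
      simp only [hNr, Matrix.add_apply, Matrix.smul_apply, Jstd, Matrix.of_apply, if_pos hij]
      simpa [smul_eq_mul] using hr.1 i j hij
    have hNrn : Nr ^ n = 0 := su_pow_n Nr hNrsu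
    have hNrn1 : Nr ^ (n - 1) ≠ 0 := by
      intro h0
      have hh := su_pow_ne Nr hNrsu hNrd (n - 1) ⟨0, hn⟩ ⟨n - 1, by omega⟩ (by simp)
      exact hh (by rw [h0]; rfl)
    obtain ⟨u₁, hu₁⟩ := cyc T hTn hTn'
    obtain ⟨u₂, hu₂⟩ := cyc Nr hNrn hNrn1
    have h21 : (↑u₂⁻¹ : Matrix (Fin n) (Fin n) ℝ) * (↑u₂ : Matrix (Fin n) (Fin n) ℝ) = 1 :=
      u₂.inv_mul
    have hNru : Nr = (↑u₂ : Matrix (Fin n) (Fin n) ℝ) * Jstd n * (↑u₂⁻¹ : Matrix (Fin n) (Fin n) ℝ) := by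
      rw [← hu₂, mul_assoc, Units.mul_inv, mul_one]
    have hTA : T * ((↑u₁ : Matrix (Fin n) (Fin n) ℝ) * (↑u₂⁻¹ : Matrix (Fin n) (Fin n) ℝ))
        = ((↑u₁ : Matrix (Fin n) (Fin n) ℝ) * (↑u₂⁻¹ : Matrix (Fin n) (Fin n) ℝ)) * Nr := by
      calc T * ((↑u₁ : Matrix (Fin n) (Fin n) ℝ) * ↑u₂⁻¹)
          = (T * ↑u₁) * ↑u₂⁻¹ := by rw [mul_assoc]
        _ = ↑u₁ * Jstd n * ↑u₂⁻¹ := by rw [hu₁]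
        _ = ↑u₁ * (((↑u₂⁻¹ : Matrix (Fin n) (Fin n) ℝ) * ↑u₂) * Jstd n * ↑u₂⁻¹) := by
            rw [h21]; noncomm_ring
        _ = (↑u₁ * ↑u₂⁻¹) * (↑u₂ * Jstd n * ↑u₂⁻¹) := by noncomm_ring
        _ = (↑u₁ * ↑u₂⁻¹) * Nr := by rw [← hNru]
    refine ⟨u₁ * u₂⁻¹ * q⁻¹, ?_⟩
    have hco : ((u₁ * u₂⁻¹ * q⁻¹ : (Matrix (Fin n) (Fin n) ℝ)ˣ) : Matrix (Fin n) (Fin n) ℝ)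
        = (↑u₁ : Matrix (Fin n) (Fin n) ℝ) * (↑u₂⁻¹ : Matrix (Fin n) (Fin n) ℝ) * V := rfl
    rw [hco]
    calc T * ((↑u₁ : Matrix (Fin n) (Fin n) ℝ) * ↑u₂⁻¹ * V)
        = (T * (↑u₁ * ↑u₂⁻¹)) * V := by noncomm_ring
      _ = ((↑u₁ : Matrix (Fin n) (Fin n) ℝ) * ↑u₂⁻¹) * Nr * V := by rw [hTA]
      _ = ((↑u₁ : Matrix (Fin n) (Fin n) ℝ) * ↑u₂⁻¹) * ((V * Q) * Nr * V) := by
          rw [hVQ]; noncomm_ring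
      _ = (↑u₁ * ↑u₂⁻¹ * V) * (Q * Nr * V) := by noncomm_ring
  set w : ℝ → (Matrix (Fin n) (Fin n) ℝ)ˣ :=
    fun r => if h : r ∈ I \ {0} then (hEx r h).choose else 1 with hw
  have hwspec : ∀ r, ∀ h : r ∈ I \ {0},
      T * (↑(w r) : Matrix (Fin n) (Fin n) ℝ)
        = (↑(w r) : Matrix (Fin n) (Fin n) ℝ) * (Q * (N + r • Jstd n) * V) := by
    intro r h
    rw [show w r = (hEx r h).choose from dif_pos h]
    exact (hEx r h).choose_spec
  have hconj : ∀ r, ∀ h : r ∈ I \ {0},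
      (↑(w r)⁻¹ : Matrix (Fin n) (Fin n) ℝ) * T * (↑(w r) : Matrix (Fin n) (Fin n) ℝ)
        = Q * (N + r • Jstd n) * V := by
    intro r h
    rw [mul_assoc, hwspec r h]
    exact (w r).inv_mul_cancel_left _
  refine ⟨I, hne, fun r => cmap (w r), fun x y => ?_⟩
  have heq : (fun r : ℝ => ((0:ℝ), x.1 • ((Q * (N + r • Jstd n) * V) *ᵥ y.2)
        - y.1 • ((Q * (N + r • Jstd n) * V) *ᵥ x.2)))
      =ᶠ[𝓝[I \ {0}] (0:ℝ)]
      (fun r => (cmap (w r)).symm (gTBracket T (cmap (w r) x) (cmap (w r) y))) := by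
    refine eventually_of_mem self_mem_nhdsWithin fun r hr => ?_
    have hM : Q * (N + r • Jstd n) * V
        = (↑(w r)⁻¹ : Matrix (Fin n) (Fin n) ℝ) * T * (↑(w r) : Matrix (Fin n) (Fin n) ℝ) :=
      (hconj r hr).symm
    simp only [cmap_apply, cmap_symm_apply, gTBracket, hM, Matrix.mulVec_sub,
      Matrix.mulVec_smul, Matrix.mulVec_mulVec, mul_assoc]
  have hA : Continuous fun r : ℝ => Q * (N + r • Jstd n) * V :=
    (continuous_const.matrix_mul (continuous_const.add
      (continuous_id.smul continuous_const))).matrix_mul continuous_const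
  have hcont : Continuous fun r : ℝ => (((0:ℝ), x.1 • ((Q * (N + r • Jstd n) * V) *ᵥ y.2)
      - y.1 • ((Q * (N + r • Jstd n) * V) *ᵥ x.2)) : ℝ × (Fin n → ℝ)) :=
    continuous_const.prodMk (((hA.matrix_mulVec continuous_const).const_smul x.1).sub
      ((hA.matrix_mulVec continuous_const).const_smul y.1))
  have h00 : (((0:ℝ), x.1 • ((Q * (N + (0:ℝ) • Jstd n) * V) *ᵥ y.2)
      - y.1 • ((Q * (N + (0:ℝ) • Jstd n) * V) *ᵥ x.2)) : ℝ × (Fin n → ℝ))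
      = gTBracket T₀ x y := by
    simp only [zero_smul, add_zero, gTBracket, ← hT₀eq]
  have hT0 : Tendsto (fun r : ℝ => (((0:ℝ), x.1 • ((Q * (N + r • Jstd n) * V) *ᵥ y.2)
      - y.1 • ((Q * (N + r • Jstd n) * V) *ᵥ x.2)) : ℝ × (Fin n → ℝ)))
      (𝓝 0) (𝓝 (gTBracket T₀ x y)) := by
    rw [← h00]
    exact hcont.tendsto 0
  exact Tendsto.congr' heq (hT0.mono_left nhdsWithin_le_nhds)
end

section
/- For every integer k ≥ 0, neither is ℝ^k × sl(2,ℝ) a contraction of ℝ^k × su(2), nor is ℝ^k × su(2) a contraction of ℝ^k × sl(2,ℝ). -/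
open Filter Topology

/-- The bracket of `su(2)` on `Fin 3 → ℝ`: `[e₁,e₂] = e₃`, `[e₂,e₃] = e₁`, `[e₃,e₁] = e₂`. -/
def su2Bracket (x y : Fin 3 → ℝ) : Fin 3 → ℝ :=
  ![x 1 * y 2 - x 2 * y 1, x 2 * y 0 - x 0 * y 2, x 0 * y 1 - x 1 * y 0]

/-- The bracket of `sl(2,ℝ)` on `Fin 3 → ℝ`: `[e₁,e₂] = e₁`, `[e₂,e₃] = e₃`,
`[e₁,e₃] = 2e₂`. -/
def sl2Bracket (x y : Fin 3 → ℝ) : Fin 3 → ℝ :=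
  ![x 0 * y 1 - x 1 * y 0, 2 * (x 0 * y 2 - x 2 * y 0), x 1 * y 2 - x 2 * y 1]

/-!
The Killing form `κ(x, y) = tr (ad x ∘ ad y)` survives contractions: conjugating by `C_r` does not
change traces, so the Killing form of the contracted algebra is the limit of the Killing forms of
the original algebra pulled back along `C_r`. Consequently negative semidefiniteness passes to a
contraction, and conversely a plane on which the contracted Killing form is negative definite (an
open condition) yields one for the original algebra.

On `su(2) × ℝ^k` the Killing form is `-2 (x₁y₁ + x₂y₂ + x₃y₃)`: negative semidefinite, and
negative definite on `span {e₁, e₂}`. On `sl(2,ℝ) × ℝ^k` it is `2x₂y₂ - 4(x₁y₃ + x₃y₁)`, which is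
positive at `e₂` and nonnegative on the hyperplane `x₁ + x₃ = 0`, so it admits no negative definite
plane.
-/

theorem tendsto_trace_comp {α W : Type*} [AddCommGroup W] [Module ℝ W] [TopologicalSpace W]
    [IsTopologicalAddGroup W] [ContinuousSMul ℝ W] [T2Space W] [FiniteDimensional ℝ W]
    {l : Filter α} {f g : α → Module.End ℝ W} {f₀ g₀ : Module.End ℝ W}
    (hf : ∀ w, Tendsto (fun a => f a w) l (𝓝 (f₀ w)))
    (hg : ∀ w, Tendsto (fun a => g a w) l (𝓝 (g₀ w))) :
    Tendsto (fun a => LinearMap.trace ℝ W (f a ∘ₗ g a)) l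
      (𝓝 (LinearMap.trace ℝ W (f₀ ∘ₗ g₀))) := by
  let b := Module.finBasis ℝ W
  have entry : ∀ {h : α → Module.End ℝ W} {h₀ : Module.End ℝ W},
      (∀ w, Tendsto (fun a => h a w) l (𝓝 (h₀ w))) → ∀ i j,
      Tendsto (fun a => LinearMap.toMatrix b b (h a) i j) l
        (𝓝 (LinearMap.toMatrix b b h₀ i j)) := fun hh i j => by
    simp only [LinearMap.toMatrix_apply]
    exact ((b.coord i).continuous_of_finiteDimensional.tendsto _).comp (hh (b j))
  simp only [LinearMap.trace_eq_matrix_trace ℝ b, LinearMap.toMatrix_comp b b b,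
    Matrix.trace, Matrix.diag, Matrix.mul_apply]
  exact tendsto_finsetSum _ fun i _ => tendsto_finsetSum _ fun j _ =>
    (entry hf i j).mul (entry hg j i)

namespace LinearMap.BilinForm

variable {V : Type*} [AddCommGroup V] [Module ℝ V]

/-- `span {u, v}` is a plane on which `κ` is negative definite (Sylvester's criterion). -/
def HasNegDefPlane (κ : LinearMap.BilinForm ℝ V) : Prop :=
  ∃ u v, κ u u < 0 ∧ κ u v ^ 2 < κ u u * κ v v

theorem not_hasNegDefPlane_of_nonneg_on_ker {κ : LinearMap.BilinForm ℝ V} (hκ : κ.IsSymm)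
    (φ : Module.Dual ℝ V) (hφ : ∀ z, φ z = 0 → 0 ≤ κ z z) : ¬ κ.HasNegDefPlane := by
  rintro ⟨u, v, huu, hdisc⟩
  have hu : φ u ≠ 0 := fun h0 => (hφ u h0).not_gt huu
  have hz := hφ (φ v • u - φ u • v) (by simp [mul_comm])
  have expand : κ (φ v • u - φ u • v) (φ v • u - φ u • v) =
      φ v ^ 2 * κ u u - 2 * (φ v * φ u) * κ u v + φ u ^ 2 * κ v v := by
    simp only [map_sub, map_smul, LinearMap.sub_apply, LinearMap.smul_apply, smul_eq_mul,
      hκ.eq v u]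
    ring
  rw [expand] at hz
  -- `κ u u` times the right side of `hz` is
  -- `(κ u u * φ v - κ u v * φ u) ^ 2 + (κ u u * κ v v - κ u v ^ 2) * φ u ^ 2 > 0`.
  nlinarith [sq_nonneg (κ u u * φ v - κ u v * φ u),
    mul_pos (sub_pos.2 hdisc) (pow_pos (abs_pos.2 hu) 2), sq_abs (φ u)]

end LinearMap.BilinForm

namespace Bracket

variable {U V W : Type*} [AddCommGroup U] [Module ℝ U] [AddCommGroup V] [Module ℝ V]
  [AddCommGroup W] [Module ℝ W]

noncomputable def killing (B : V →ₗ[ℝ] V →ₗ[ℝ] V) : LinearMap.BilinForm ℝ V :=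
  ((LinearMap.mul ℝ (Module.End ℝ V)).compl₁₂ B B).compr₂ (LinearMap.trace ℝ V)

theorem killing_apply (B : V →ₗ[ℝ] V →ₗ[ℝ] V) (x y : V) :
    killing B x y = LinearMap.trace ℝ V (B x ∘ₗ B y) :=
  rfl

theorem killing_isSymm (B : V →ₗ[ℝ] V →ₗ[ℝ] V) : (killing B).IsSymm :=
  ⟨fun x y => LinearMap.trace_mul_comm ℝ (B x) (B y)⟩

section Contraction

variable [TopologicalSpace W] [IsTopologicalAddGroup W] [ContinuousSMul ℝ W] [T2Space W]
  [FiniteDimensional ℝ W] {B : V →ₗ[ℝ] V →ₗ[ℝ] V} {B₀ : W →ₗ[ℝ] W →ₗ[ℝ] W}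

theorem _root_.IsContractionOf.tendsto_killing
    (h : IsContractionOf (fun x y => B x y) (fun x y => B₀ x y)) :
    ∃ l : Filter ℝ, l.NeBot ∧ ∃ C : ℝ → (W ≃ₗ[ℝ] V), ∀ x y,
      Tendsto (fun r => killing B (C r x) (C r y)) l (𝓝 (killing B₀ x y)) := by
  obtain ⟨I, hI, C, hC⟩ := h
  refine ⟨_, hI, C, fun x y => ?_⟩
  have conj_apply : ∀ r z w,
      (C r).symm.conj (B (C r z)) w = (C r).symm (B (C r z) (C r w)) :=
    fun r z w => by simp [LinearEquiv.conj_apply]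
  have killing_eq_trace_conj : ∀ r, killing B (C r x) (C r y) =
      LinearMap.trace ℝ W ((C r).symm.conj (B (C r x)) ∘ₗ (C r).symm.conj (B (C r y))) := by
    intro r
    rw [← LinearEquiv.conj_comp, LinearMap.trace_conj', killing_apply]
  simp only [killing_eq_trace_conj]
  exact tendsto_trace_comp (fun w => by simpa only [conj_apply] using hC x w)
    (fun w => by simpa only [conj_apply] using hC y w)

theorem _root_.IsContractionOf.killing_self_nonpos
    (h : IsContractionOf (fun x y => B x y) (fun x y => B₀ x y))
    (hB : ∀ v, killing B v v ≤ 0) (x : W) : killing B₀ x x ≤ 0 := by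
  obtain ⟨l, hl, C, hC⟩ := h.tendsto_killing
  exact le_of_tendsto (hC x x) (Eventually.of_forall fun r => hB _)

theorem _root_.IsContractionOf.hasNegDefPlane
    (h : IsContractionOf (fun x y => B x y) (fun x y => B₀ x y))
    (h₀ : (killing B₀).HasNegDefPlane) : (killing B).HasNegDefPlane := by
  obtain ⟨l, hl, C, hC⟩ := h.tendsto_killing
  obtain ⟨u, v, huu, hdisc⟩ := h₀
  obtain ⟨r, huu', hdisc'⟩ := ((hC u u).eventually_lt_const huu |>.and
    (((hC u v).pow 2).eventually_lt ((hC u u).mul (hC v v)) hdisc)).exists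
  exact ⟨C r u, C r v, huu', hdisc'⟩

end Contraction

noncomputable def prodAbelian (B : U →ₗ[ℝ] U →ₗ[ℝ] U) (A : Type*) [AddCommGroup A] [Module ℝ A] :
    U × A →ₗ[ℝ] U × A →ₗ[ℝ] U × A :=
  (B.compl₁₂ (LinearMap.fst ℝ U A) (LinearMap.fst ℝ U A)).compr₂ (LinearMap.inl ℝ U A)

section ProdAbelian

variable {A : Type*} [AddCommGroup A] [Module ℝ A]

theorem prodAbelian_apply (B : U →ₗ[ℝ] U →ₗ[ℝ] U) (x y : U × A) :
    prodAbelian B A x y = (B x.1 y.1, 0) :=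
  rfl

theorem killing_prodAbelian [Module.Free ℝ U] [Module.Finite ℝ U] [Module.Free ℝ A]
    [Module.Finite ℝ A] (B : U →ₗ[ℝ] U →ₗ[ℝ] U) (x y : U × A) :
    killing (prodAbelian B A) x y = killing B x.1 y.1 := by
  have hcomp : prodAbelian B A x ∘ₗ prodAbelian B A y = (B x.1 ∘ₗ B y.1).prodMap 0 := by
    ext <;> simp [prodAbelian_apply]
  rw [killing_apply, hcomp, LinearMap.trace_prodMap', map_zero, add_zero, killing_apply]

end ProdAbelian

end Bracket

open Bracket

theorem killing_crossProduct (x y : Fin 3 → ℝ) :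
    killing crossProduct x y = -2 * (x 0 * y 0 + x 1 * y 1 + x 2 * y 2) := by
  rw [killing_apply, LinearMap.trace_eq_matrix_trace ℝ (Pi.basisFun ℝ (Fin 3)),
    LinearMap.toMatrix_eq_toMatrix', Matrix.trace_fin_three]
  simp only [Fin.isValue, LinearMap.toMatrix'_apply, LinearMap.coe_comp, Function.comp_apply,
    cross_apply, ne_eq, Fin.reduceEq, not_false_eq_true, Pi.single_eq_of_ne, mul_zero, one_ne_zero,
    sub_self, Pi.single_eq_same, mul_one, sub_zero, zero_sub, Matrix.cons_val, mul_neg,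
    Matrix.cons_val_one, Matrix.cons_val_zero, sub_neg_eq_add, zero_add, zero_ne_one, neg_mul]
  ring

noncomputable def sl2Bracketₗ : (Fin 3 → ℝ) →ₗ[ℝ] (Fin 3 → ℝ) →ₗ[ℝ] Fin 3 → ℝ :=
  LinearMap.mk₂ ℝ sl2Bracket
    (fun _ _ _ => by ext i; fin_cases i <;> simp [sl2Bracket] <;> ring)
    (fun _ _ _ => by ext i; fin_cases i <;> simp [sl2Bracket] <;> ring)
    (fun _ _ _ => by ext i; fin_cases i <;> simp [sl2Bracket] <;> ring)
    (fun _ _ _ => by ext i; fin_cases i <;> simp [sl2Bracket] <;> ring)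

theorem killing_sl2Bracketₗ (x y : Fin 3 → ℝ) :
    killing sl2Bracketₗ x y = 2 * x 1 * y 1 - 4 * (x 0 * y 2 + x 2 * y 0) := by
  rw [killing_apply, LinearMap.trace_eq_matrix_trace ℝ (Pi.basisFun ℝ (Fin 3)),
    LinearMap.toMatrix_eq_toMatrix', Matrix.trace_fin_three]
  simp only [sl2Bracketₗ, Fin.isValue, LinearMap.toMatrix'_apply, LinearMap.coe_comp,
    Function.comp_apply, LinearMap.mk₂_apply, sl2Bracket, ne_eq, one_ne_zero, not_false_eq_true,
    Pi.single_eq_of_ne, mul_zero, Pi.single_eq_same, mul_one, zero_sub, Fin.reduceEq, mul_neg,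
    sub_self, Matrix.cons_val_one, Matrix.cons_val_zero, sub_neg_eq_add, Matrix.cons_val, zero_add,
    zero_ne_one, sub_zero]
  ring

section Killing

variable (A : Type*) [AddCommGroup A] [Module ℝ A] [Module.Free ℝ A] [Module.Finite ℝ A]

theorem killing_prodAbelian_crossProduct_self_nonpos (v : (Fin 3 → ℝ) × A) :
    killing (prodAbelian crossProduct A) v v ≤ 0 := by
  rw [killing_prodAbelian, killing_crossProduct]
  nlinarith [mul_self_nonneg (v.1 0), mul_self_nonneg (v.1 1), mul_self_nonneg (v.1 2)]

theorem hasNegDefPlane_killing_prodAbelian_crossProduct :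
    (killing (prodAbelian crossProduct A)).HasNegDefPlane :=
  ⟨(![1, 0, 0], 0), (![0, 1, 0], 0), by simp [killing_prodAbelian, killing_crossProduct]⟩

theorem not_hasNegDefPlane_killing_prodAbelian_sl2Bracketₗ :
    ¬ (killing (prodAbelian sl2Bracketₗ A)).HasNegDefPlane := by
  refine LinearMap.BilinForm.not_hasNegDefPlane_of_nonneg_on_ker (killing_isSymm _)
    ((LinearMap.proj (R := ℝ) (φ := fun _ : Fin 3 => ℝ) 0 + LinearMap.proj 2) ∘ₗ
      LinearMap.fst ℝ _ A) fun z hz => ?_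
  have hz2 : z.1 2 = -z.1 0 := by
    simp only [LinearMap.comp_apply, LinearMap.add_apply, LinearMap.proj_apply,
      LinearMap.fst_apply] at hz
    linarith
  rw [killing_prodAbelian, killing_sl2Bracketₗ, hz2]
  nlinarith [mul_self_nonneg (z.1 0), mul_self_nonneg (z.1 1)]

end Killing

/-- For every `k ≥ 0`, neither is `ℝ^k × sl(2,ℝ)` a contraction of `ℝ^k × su(2)`,
nor is `ℝ^k × su(2)` a contraction of `ℝ^k × sl(2,ℝ)`. -/
theorem not_contraction_su2_sl2 (k : ℕ) :
    (¬ IsContractionOf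
        (fun x y : (Fin 3 → ℝ) × (Fin k → ℝ) => (su2Bracket x.1 y.1, 0))
        (fun x y : (Fin 3 → ℝ) × (Fin k → ℝ) => (sl2Bracket x.1 y.1, 0))) ∧
    (¬ IsContractionOf
        (fun x y : (Fin 3 → ℝ) × (Fin k → ℝ) => (sl2Bracket x.1 y.1, 0))
        (fun x y : (Fin 3 → ℝ) × (Fin k → ℝ) => (su2Bracket x.1 y.1, 0))) := by
  -- Both brackets are definitionally `prodAbelian`s: `su2Bracket` is the cross product.
  constructor
  · intro h
    have hnonpos := h.killing_self_nonpos (B := prodAbelian crossProduct (Fin k → ℝ))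
      (B₀ := prodAbelian sl2Bracketₗ (Fin k → ℝ))
      (killing_prodAbelian_crossProduct_self_nonpos _) (![0, 1, 0], 0)
    norm_num [killing_prodAbelian, killing_sl2Bracketₗ] at hnonpos
  · intro h
    exact not_hasNegDefPlane_killing_prodAbelian_sl2Bracketₗ _ <|
      h.hasNegDefPlane (B := prodAbelian sl2Bracketₗ (Fin k → ℝ))
        (B₀ := prodAbelian crossProduct (Fin k → ℝ))
        (hasNegDefPlane_killing_prodAbelian_crossProduct _)
end

section
/- The Lie algebra A_{3,5}^0 is a contraction of su(2); an explicit contraction is given by the maps C_r = diag(r, r, 1) as r → 0+. -/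
open Filter Topology

/-- The bracket of `A_{3,5}^0` on `Fin 3 → ℝ`: `[e₁,e₃] = -e₂`, `[e₂,e₃] = e₁`. -/
def a350Bracket (x y : Fin 3 → ℝ) : Fin 3 → ℝ :=
  ![x 1 * y 2 - x 2 * y 1, -(x 0 * y 2 - x 2 * y 0), 0]

/-! Conjugating the `su(2)` bracket by `C_r = diag(r, r, 1)` gives
`C_r⁻¹[C_r x, C_r y] = [x, y]₀ + r² (x₁y₂ - x₂y₁) e₃`, with `[·,·]₀` the bracket of `A_{3,5}^0`:
the brackets `[e₁,e₃]`, `[e₂,e₃]` are unchanged, while `[e₁,e₂] = e₃` picks up the factor `r²`,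
which vanishes as `r → 0`. -/

section DiagScaling

variable {R ι : Type*} [CommRing R]

def diagScaling (d : ι → Rˣ) : (ι → R) ≃ₗ[R] (ι → R) :=
  LinearEquiv.piCongrRight fun i => LinearEquiv.smulOfUnit (d i)

@[simp]
lemma diagScaling_apply (d : ι → Rˣ) (x : ι → R) : diagScaling d x = fun i => d i * x i :=
  rfl

@[simp]
lemma diagScaling_symm_apply (d : ι → Rˣ) (x : ι → R) :
    (diagScaling d).symm x = fun i => ↑(d i)⁻¹ * x i :=
  rfl

end DiagScaling

noncomputable def su2ScaledBracket (r : ℝ) (x y : Fin 3 → ℝ) : Fin 3 → ℝ :=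
  fun i => (![r⁻¹, r⁻¹, 1] : Fin 3 → ℝ) i *
    su2Bracket (fun j => ![r, r, 1] j * x j) (fun j => ![r, r, 1] j * y j) i

lemma su2ScaledBracket_eq {r : ℝ} (hr : r ≠ 0) (x y : Fin 3 → ℝ) :
    su2ScaledBracket r x y = a350Bracket x y + r ^ 2 • ![0, 0, x 0 * y 1 - x 1 * y 0] := by
  ext i
  fin_cases i <;>
    simp only [su2ScaledBracket, su2Bracket, a350Bracket, Fin.reduceFinMk, Fin.zero_eta,
      Fin.mk_one, Fin.isValue, Matrix.cons_val, Matrix.cons_val_zero, Matrix.cons_val_one,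
      Matrix.smul_cons, Matrix.smul_empty, smul_eq_mul, Pi.add_apply] <;>
    field_simp <;> ring

lemma tendsto_su2ScaledBracket (x y : Fin 3 → ℝ) :
    Tendsto (fun r => su2ScaledBracket r x y) (𝓝[>] 0) (𝓝 (a350Bracket x y)) := by
  have hcont : Tendsto (fun r : ℝ => a350Bracket x y + r ^ 2 • ![0, 0, x 0 * y 1 - x 1 * y 0])
      (𝓝 0) (𝓝 (a350Bracket x y)) := by
    convert tendsto_const_nhds.add
      (((continuous_pow 2).tendsto (0 : ℝ)).smul_const ![0, 0, x 0 * y 1 - x 1 * y 0]) using 2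
    simp
  refine (hcont.mono_left nhdsWithin_le_nhds).congr' ?_
  filter_upwards [self_mem_nhdsWithin] with r (hr : 0 < r)
  exact (su2ScaledBracket_eq hr.ne' x y).symm

-- Any invertible value at `r = 0` would do: the contraction only uses `r > 0`.
noncomputable def su2ContractionMap (r : ℝ) : (Fin 3 → ℝ) ≃ₗ[ℝ] (Fin 3 → ℝ) :=
  if h : r = 0 then LinearEquiv.refl ℝ _ else diagScaling ![Units.mk0 r h, Units.mk0 r h, 1]

lemma su2ContractionMap_conj {r : ℝ} (hr : r ≠ 0) (x y : Fin 3 → ℝ) :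
    (su2ContractionMap r).symm (su2Bracket (su2ContractionMap r x) (su2ContractionMap r y)) =
      su2ScaledBracket r x y := by
  ext i
  fin_cases i <;> simp [su2ContractionMap, hr, su2Bracket, su2ScaledBracket]

/-- `A_{3,5}^0` is a contraction of `su(2)`; an explicit contraction is given by the
maps `C_r = diag(r, r, 1)` as `r → 0+`. -/
theorem a350_isContractionOf_su2 :
    (∀ x y : Fin 3 → ℝ,
      Tendsto (fun r : ℝ => fun i =>
          (![r⁻¹, r⁻¹, 1] : Fin 3 → ℝ) i *
            su2Bracket (fun j => ![r, r, 1] j * x j) (fun j => ![r, r, 1] j * y j) i)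
        (𝓝[>] (0 : ℝ)) (𝓝 (a350Bracket x y))) ∧
    IsContractionOf su2Bracket a350Bracket := by
  have hI : Set.Ioi (0 : ℝ) \ {0} = Set.Ioi 0 := by simp
  refine ⟨tendsto_su2ScaledBracket, Set.Ioi 0, by rw [hI]; exact nhdsGT_neBot 0,
    su2ContractionMap, fun x y => ?_⟩
  rw [hI]
  refine (tendsto_su2ScaledBracket x y).congr' ?_
  filter_upwards [self_mem_nhdsWithin] with r (hr : 0 < r)
  exact (su2ContractionMap_conj hr.ne' x y).symm
end
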